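/- arXiv:2306.09146 — 4 statements merged into one kernel-verified Lean document; each statement's English description precedes it below -/
import Mathlib

section
/- Let H be a 2-colored graph whose red color class is an independent set, and let G be a blow-up of H, i.e., for some cardinal i with 2 ≤ i ≤ ℵ₀, G is obtained from H by replacing every red vertex of H by an i-clique whose vertices are joined to exactly the neighbors of the original vertex (so G[R] = H[R_H]·K_i, G[B] = H[B_H], and (u,v) is adjacent to b in G iff u is adjacent to b in H). Then G is ultrahomogeneous if and only if H is ultrahomogeneous. -/
open SimpleGraph

/-- A partial colored isomorphism of the 2-colored graph `(G, red)`, defined on the set `S`: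
an injective map preserving colors and adjacency on `S`. -/
def IsPartialIso {V : Type} (G : SimpleGraph V) (red : V → Prop) (S : Set V) (f : V → V) :
    Prop :=
  Set.InjOn f S ∧ (∀ v ∈ S, (red (f v) ↔ red v)) ∧
    ∀ u ∈ S, ∀ v ∈ S, (G.Adj (f u) (f v) ↔ G.Adj u v)

/-- A 2-colored graph is ultrahomogeneous if every isomorphism between two finite induced
colored subgraphs extends to a color-preserving automorphism. -/
def Ultrahomogeneous {V : Type} (G : SimpleGraph V) (red : V → Prop) : Prop :=
  ∀ S : Set V, S.Finite → ∀ f : V → V, IsPartialIso G red S f →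
    ∃ ψ : G ≃g G, (∀ v, red (ψ v) ↔ red v) ∧ ∀ v ∈ S, ψ v = f v

/-- The set `P` induces a disjoint union of cliques in `G` (no induced monochromatic `P₃`). -/
def IsUnionOfCliques {V : Type} (G : SimpleGraph V) (P : Set V) : Prop :=
  ∀ u ∈ P, ∀ v ∈ P, ∀ w ∈ P, G.Adj u v → G.Adj v w → u ≠ w → G.Adj u w

/-- `M` is an inclusion-wise maximal clique of the subgraph of `G` induced on `P`. -/
def IsMaxCliqueIn {V : Type} (G : SimpleGraph V) (P : Set V) (M : Set V) : Prop :=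
  M ⊆ P ∧ G.IsClique M ∧ ∀ M' : Set V, M' ⊆ P → G.IsClique M' → M ⊆ M' → M = M'

/-- `S` is an independent set in `G`. -/
def IsIndepIn {V : Type} (G : SimpleGraph V) (S : Set V) : Prop :=
  ∀ u ∈ S, ∀ v ∈ S, ¬ G.Adj u v

/-- The 2-colored graph `(H, redH)` is realized in `(G, red)`, i.e. isomorphic to an
induced colored subgraph of `G`. -/
def Realizes {V : Type} (G : SimpleGraph V) (red : V → Prop) {W : Type} (H : SimpleGraph W)
    (redH : W → Prop) : Prop :=
  ∃ f : W → V, Function.Injective f ∧ (∀ w, red (f w) ↔ redH w) ∧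
    ∀ u w : W, G.Adj (f u) (f w) ↔ H.Adj u w

/-- `(H, redH)` is minimally omitted in `(G, red)`: it is omitted, but every proper induced
subgraph of it is realized. -/
def MinOmitted {V : Type} (G : SimpleGraph V) (red : V → Prop) {W : Type} (H : SimpleGraph W)
    (redH : W → Prop) : Prop :=
  ¬ Realizes G red H redH ∧
    ∀ S : Set W, S ≠ Set.univ → Realizes G red (H.induce S) (fun x => redH x.1)

/-- Isomorphism of 2-colored graphs. -/
def ColoredIso {V : Type} (G : SimpleGraph V) (red : V → Prop) {W : Type} (H : SimpleGraph W)
    (redH : W → Prop) : Prop :=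
  ∃ e : G ≃g H, ∀ v, red v ↔ redH (e v)

/-- The graph obtained from `G` by complementing the cross edges while keeping the
edges inside each color class. -/
def crossComp {V : Type} (G : SimpleGraph V) (red : V → Prop) : SimpleGraph V :=
  SimpleGraph.fromRel (fun u v =>
    ((red u ↔ red v) ∧ G.Adj u v) ∨ (¬ (red u ↔ red v) ∧ ¬ G.Adj u v))

/-- The blow-up of the 2-colored graph `(H, redH)` (whose red class should be independent),
replacing every red vertex by a copy of `I` forming a clique, joined to the neighbors of the
original vertex. -/
def blowUp {V : Type} (H : SimpleGraph V) (redH : V → Prop) (I : Type) :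
    SimpleGraph ({v : V // redH v} × I ⊕ {v : V // ¬ redH v}) :=
  SimpleGraph.fromRel (fun x y =>
    match x, y with
    | Sum.inl (u, i), Sum.inl (u', i') => H.Adj u.1 u'.1 ∨ (u = u' ∧ i ≠ i')
    | Sum.inl (u, _), Sum.inr b => H.Adj u.1 b.1
    | Sum.inr b, Sum.inl (u, _) => H.Adj b.1 u.1
    | Sum.inr b, Sum.inr b' => H.Adj b.1 b'.1)

/-- The coloring of the blow-up: all vertices replacing red vertices are red. -/
def blowUpRed (V : Type) (redH : V → Prop) (I : Type) :
    ({v : V // redH v} × I ⊕ {v : V // ¬ redH v}) → Prop :=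
  Sum.elim (fun _ => True) (fun _ => False)

/-- `(G, red)` is a blow-up with the red class blown up: it is isomorphic (as a colored graph)
to the blow-up of some `(H, redH)` with independent red class by an `i`-clique, `2 ≤ i ≤ ℵ₀`. -/
def IsBlowUpOf {V : Type} (G : SimpleGraph V) (red : V → Prop) : Prop :=
  ∃ (U : Type) (H : SimpleGraph U) (redH : U → Prop) (I : Type),
    (∀ u v : U, redH u → redH v → ¬ H.Adj u v) ∧
    2 ≤ Cardinal.mk I ∧ Cardinal.mk I ≤ Cardinal.aleph0 ∧
    ∃ e : G ≃g blowUp H redH I, ∀ v, red v ↔ blowUpRed U redH I (e v)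

/-- `(G, red)` is a blow-up (of one of its two color classes). -/
def IsBlowUp {V : Type} (G : SimpleGraph V) (red : V → Prop) : Prop :=
  IsBlowUpOf G red ∨ IsBlowUpOf G (fun v => ¬ red v)

/-- A CUH graph: a countably infinite ultrahomogeneous 2-colored graph in which both
color classes induce disjoint unions of cliques. -/
def IsCUH {V : Type} (G : SimpleGraph V) (red : V → Prop) : Prop :=
  Countable V ∧ Infinite V ∧ Ultrahomogeneous G red ∧
    IsUnionOfCliques G {v | red v} ∧ IsUnionOfCliques G {v | ¬ red v}

/-- A basic CUH graph: a CUH graph which is not a blow-up and where both independence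
numbers are at least 2. -/
def IsBasicCUH {V : Type} (G : SimpleGraph V) (red : V → Prop) : Prop :=
  IsCUH G red ∧ ¬ IsBlowUp G red ∧
    (∃ u v, red u ∧ red v ∧ u ≠ v ∧ ¬ G.Adj u v) ∧
    (∃ u v, ¬ red u ∧ ¬ red v ∧ u ≠ v ∧ ¬ G.Adj u v)

/-- The graph `D`: red vertices `0, 1`, blue vertices `2, 3`, edges
`{01, 23, 02, 03, 12}` (a 2-colored diamond). -/
def Dgraph : SimpleGraph (Fin 4) :=
  SimpleGraph.fromRel (fun x y =>
    (x = 0 ∧ y = 1) ∨ (x = 2 ∧ y = 3) ∨ (x = 0 ∧ y = 2) ∨ (x = 0 ∧ y = 3) ∨ (x = 1 ∧ y = 2))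

/-- The coloring of `D` and `D̃`: `0, 1` are red, `2, 3` are blue. -/
def Dred : Fin 4 → Prop := fun x => x = 0 ∨ x = 1

/-- The graph `D̃`, the cross-edge complement of `D`: the path `0 – 1 – 3 – 2`. -/
def Dtilde : SimpleGraph (Fin 4) :=
  SimpleGraph.fromRel (fun x y => (x = 0 ∧ y = 1) ∨ (x = 1 ∧ y = 3) ∨ (x = 3 ∧ y = 2))

/-- `T_r`: the triangle with two red vertices and one blue vertex. -/
def Tr : SimpleGraph (Fin 3) := ⊤

/-- The coloring of `T_r` and `T̃_r`: `0, 1` red, `2` blue. -/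
def TrRed : Fin 3 → Prop := fun x => x = 0 ∨ x = 1

/-- `T̃_r`: a red edge together with an isolated blue vertex. -/
def TrTilde : SimpleGraph (Fin 3) := SimpleGraph.fromRel (fun x y => x = 0 ∧ y = 1)

/-- `T_b`: the triangle with one red vertex and two blue vertices. -/
def Tb : SimpleGraph (Fin 3) := ⊤

/-- The coloring of `T_b` and `T̃_b`: `0` red, `1, 2` blue. -/
def TbRed : Fin 3 → Prop := fun x => x = 0

/-- `T̃_b`: a blue edge together with an isolated red vertex. -/
def TbTilde : SimpleGraph (Fin 3) := SimpleGraph.fromRel (fun x y => x = 1 ∧ y = 2)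

/-! ### Auxiliary lemmas for `stmt_0` -/

section Stmt0Aux

/-- A finite partial injection on any type extends to a permutation. -/
lemma exists_perm_extend' {I : Type} (D : Set I) (hD : D.Finite) (τ : I → I)
    (hinj : Set.InjOn τ D) : ∃ σ : Equiv.Perm I, ∀ i ∈ D, σ i = τ i := by
  classical
  set R : Set I := τ '' D with hR
  let m : D → R := fun x => ⟨τ x.1, Set.mem_image_of_mem τ x.2⟩
  have hm : Function.Bijective m := by
    constructor
    · rintro a b h
      exact Subtype.ext (hinj a.2 b.2 (congrArg Subtype.val h))
    · rintro ⟨y, i, hi, rfl⟩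
      exact ⟨⟨i, hi⟩, rfl⟩
  have hfinD : Cardinal.mk D < Cardinal.aleph0 := hD.lt_aleph0
  have hDR : Cardinal.mk D = Cardinal.mk R := Cardinal.mk_congr (Equiv.ofBijective m hm)
  have hcc : Cardinal.mk (Dᶜ : Set I) = Cardinal.mk (Rᶜ : Set I) := by
    have h1 := Cardinal.mk_sum_compl D
    have h2 := Cardinal.mk_sum_compl R
    refine Cardinal.eq_of_add_eq_add_left ?_ hfinD
    rw [h1, hDR, h2]
  obtain ⟨eC⟩ := Cardinal.eq.mp hcc
  refine ⟨(Equiv.Set.sumCompl D).symm.trans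
    (((Equiv.ofBijective m hm).sumCongr eC).trans (Equiv.Set.sumCompl R)), fun i hi => ?_⟩
  simp [Equiv.Set.sumCompl_symm_apply_of_mem hi, m]

/-- Transport of ultrahomogeneity along a colored isomorphism. -/
lemma uh_transport {V W : Type} {G : SimpleGraph V} {red : V → Prop} {G' : SimpleGraph W}
    {red' : W → Prop} (e : G ≃g G') (he : ∀ v, red v ↔ red' (e v))
    (h : Ultrahomogeneous G' red') : Ultrahomogeneous G red := by
  intro S hS f hf
  obtain ⟨hinj, hcol, hadj⟩ := hf
  have hpf' : IsPartialIso G' red' (e '' S) (fun w => e (f (e.symm w))) := by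
    refine ⟨?_, ?_, ?_⟩
    · rintro _ ⟨a, ha, rfl⟩ _ ⟨b, hb, rfl⟩ hab
      simp only [RelIso.symm_apply_apply] at hab
      have := hinj ha hb (e.toEquiv.injective hab)
      rw [this]
    · rintro _ ⟨a, ha, rfl⟩
      simp only [RelIso.symm_apply_apply]
      rw [← he (f a), ← he a]
      exact hcol a ha
    · rintro _ ⟨a, ha, rfl⟩ _ ⟨b, hb, rfl⟩
      simp only [RelIso.symm_apply_apply]
      rw [e.map_adj_iff, e.map_adj_iff]
      exact hadj a ha b hb
  obtain ⟨ψ', hψ'c, hψ'e⟩ := h (e '' S) (hS.image _) _ hpf'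
  refine ⟨(e.trans ψ').trans e.symm, fun v => ?_, fun v hv => ?_⟩
  · show red (e.symm (ψ' (e v))) ↔ red v
    rw [he (e.symm (ψ' (e v))), RelIso.apply_symm_apply, hψ'c, ← he]
  · show e.symm (ψ' (e v)) = f v
    rw [hψ'e (e v) ⟨v, hv, rfl⟩]
    simp only [RelIso.symm_apply_apply]

variable {V I : Type} {H : SimpleGraph V} {redH : V → Prop}

lemma blowUp_adj_inl_inl (u u' : {v // redH v}) (i i' : I) :
    (blowUp H redH I).Adj (Sum.inl (u, i)) (Sum.inl (u', i')) ↔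
      H.Adj u.1 u'.1 ∨ (u = u' ∧ i ≠ i') := by
  simp only [blowUp, fromRel_adj]
  constructor
  · rintro ⟨hne, h | h⟩
    · exact h
    · rcases h with h | ⟨he, hi⟩
      · exact Or.inl h.symm
      · exact Or.inr ⟨he.symm, hi.symm⟩
  · intro h
    refine ⟨?_, Or.inl h⟩
    rcases h with h | ⟨rfl, hi⟩
    · intro hx
      injection hx with hx
      have : u = u' := congrArg Prod.fst hx
      rw [this] at h
      exact H.loopless.irrefl _ h
    · intro hx
      injection hx with hx
      exact hi (congrArg Prod.snd hx)

lemma blowUp_adj_inl_inr (u : {v // redH v}) (i : I) (b : {v // ¬ redH v}) :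
    (blowUp H redH I).Adj (Sum.inl (u, i)) (Sum.inr b) ↔ H.Adj u.1 b.1 := by
  simp only [blowUp, fromRel_adj]
  constructor
  · rintro ⟨hne, h | h⟩ <;> [exact h; exact h.symm]
  · exact fun h => ⟨by simp, Or.inl h⟩

lemma blowUp_adj_inr_inl (b : {v // ¬ redH v}) (u : {v // redH v}) (i : I) :
    (blowUp H redH I).Adj (Sum.inr b) (Sum.inl (u, i)) ↔ H.Adj b.1 u.1 := by
  simp only [blowUp, fromRel_adj]
  constructor
  · rintro ⟨hne, h | h⟩ <;> [exact h; exact h.symm]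
  · exact fun h => ⟨by simp, Or.inl h⟩

lemma blowUp_adj_inr_inr (b b' : {v // ¬ redH v}) :
    (blowUp H redH I).Adj (Sum.inr b : {v : V // redH v} × I ⊕ {v : V // ¬ redH v})
      (Sum.inr b') ↔ H.Adj b.1 b'.1 := by
  simp only [blowUp, fromRel_adj]
  constructor
  · rintro ⟨hne, h | h⟩ <;> [exact h; exact h.symm]
  · intro h
    refine ⟨fun hx => ?_, Or.inl h⟩
    injection hx with hx
    exact H.loopless.irrefl _ (by rw [hx] at h; exact h)

/-- The projection from the blow-up back to the base graph. -/
def bproj (redH : V → Prop) (I : Type) :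
    ({v : V // redH v} × I ⊕ {v : V // ¬ redH v}) → V :=
  Sum.elim (fun x => x.1.1) (fun b => b.1)

lemma redH_bproj (x : {v : V // redH v} × I ⊕ {v : V // ¬ redH v}) :
    redH (bproj redH I x) ↔ blowUpRed V redH I x := by
  rcases x with ⟨u, i⟩ | b
  · simpa [bproj, blowUpRed] using u.2
  · simpa [bproj, blowUpRed] using b.2

lemma adj_bproj (x y : {v : V // redH v} × I ⊕ {v : V // ¬ redH v})
    (hxy : ¬ (blowUpRed V redH I x ∧ blowUpRed V redH I y)) :
    (blowUp H redH I).Adj x y ↔ H.Adj (bproj redH I x) (bproj redH I y) := by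
  rcases x with ⟨u, i⟩ | b <;> rcases y with ⟨u', i'⟩ | b'
  · exact absurd ⟨trivial, trivial⟩ hxy
  · exact blowUp_adj_inl_inr u i b'
  · exact blowUp_adj_inr_inl b u' i'
  · exact blowUp_adj_inr_inr b b'

lemma bred_form (x : {v : V // redH v} × I ⊕ {v : V // ¬ redH v})
    (hx : blowUpRed V redH I x) : ∃ u i, x = Sum.inl (u, i) := by
  rcases x with ⟨u, i⟩ | b
  · exact ⟨u, i, rfl⟩
  · exact absurd hx (by simp [blowUpRed])

lemma bblue_form (x : {v : V // redH v} × I ⊕ {v : V // ¬ redH v})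
    (hx : ¬ blowUpRed V redH I x) : ∃ b, x = Sum.inr b := by
  rcases x with ⟨u, i⟩ | b
  · exact absurd (by trivial) hx
  · exact ⟨b, rfl⟩

end Stmt0Aux

section Dir2
variable {V I : Type} {H : SimpleGraph V} {redH : V → Prop}

lemma uh_of_blowUp_uh (hind : ∀ u v : V, redH u → redH v → ¬ H.Adj u v) (i₀ : I)
    (hB : Ultrahomogeneous (blowUp H redH I) (blowUpRed V redH I)) :
    Ultrahomogeneous H redH := by
  classical
  set B := blowUp H redH I with hBdef
  set bred := blowUpRed V redH I with hbreddef
  set p := bproj redH (V := V) I with hpdef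
  set ι : V → ({v : V // redH v} × I ⊕ {v : V // ¬ redH v}) :=
    fun v => if h : redH v then Sum.inl (⟨v, h⟩, i₀) else Sum.inr ⟨v, h⟩ with hιdef
  have hpι : ∀ v, p (ι v) = v := by
    intro v; by_cases h : redH v <;> simp [hιdef, hpdef, bproj, h]
  have hcι : ∀ v, bred (ι v) ↔ redH v := by
    intro v; by_cases h : redH v <;> simp [hιdef, hbreddef, blowUpRed, h]
  have hιred : ∀ v (h : redH v), ι v = Sum.inl (⟨v, h⟩, i₀) := by
    intro v h; simp [hιdef, h]
  have hιblue : ∀ v (h : ¬ redH v), ι v = Sum.inr ⟨v, h⟩ := by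
    intro v h; simp [hιdef, h]
  have haι : ∀ u v, B.Adj (ι u) (ι v) ↔ H.Adj u v := by
    intro u v
    by_cases hu : redH u <;> by_cases hv : redH v <;>
      simp [hιdef, hu, hv, hBdef, blowUp_adj_inl_inl, blowUp_adj_inl_inr,
        blowUp_adj_inr_inl, blowUp_adj_inr_inr]
  intro S hS g hg
  obtain ⟨ginj, gcol, gadj⟩ := hg
  have key : IsPartialIso B bred (ι '' S) (fun x => ι (g (p x))) := by
    refine ⟨?_, ?_, ?_⟩
    · rintro _ ⟨a, ha, rfl⟩ _ ⟨b, hb, rfl⟩ hab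
      simp only [hpι] at hab
      have h1 : g a = g b := by
        have := congrArg p hab
        simpa only [hpι] using this
      rw [ginj ha hb h1]
    · rintro _ ⟨a, ha, rfl⟩
      simp only [hpι]
      simp only [hcι]
      exact gcol a ha
    · rintro _ ⟨a, ha, rfl⟩ _ ⟨b, hb, rfl⟩
      simp only [hpι]
      simp only [haι]
      exact gadj a ha b hb
  obtain ⟨Ψ, hΨc, hΨe⟩ := hB (ι '' S) (hS.image ι) _ key
  set ψ : V → V := fun v => p (Ψ (ι v)) with hψdef
  have hψred : ∀ v, redH (ψ v) ↔ redH v := by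
    intro v
    show redH (p (Ψ (ι v))) ↔ redH v
    rw [hpdef, redH_bproj (Ψ (ι v))]
    rw [← hbreddef]
    rw [hΨc, hcι]
  have hΨc' : ∀ x, bred (Ψ.symm x) ↔ bred x := by
    intro x
    conv_rhs => rw [← Ψ.apply_symm_apply x]
    exact (hΨc (Ψ.symm x)).symm
  have hψadj : ∀ u v, H.Adj (ψ u) (ψ v) ↔ H.Adj u v := by
    intro u v
    by_cases hu : redH u <;> by_cases hv : redH v
    · constructor
      · intro h; exact absurd h (hind _ _ ((hψred u).mpr hu) ((hψred v).mpr hv))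
      · intro h; exact absurd h (hind u v hu hv)
    all_goals {
      have hnb : ¬ (bred (Ψ (ι u)) ∧ bred (Ψ (ι v))) := by
        simp only [hΨc, hcι]; tauto
      show H.Adj (p (Ψ (ι u))) (p (Ψ (ι v))) ↔ H.Adj u v
      rw [hpdef, ← adj_bproj _ _ hnb, Ψ.map_adj_iff, haι] }
  have hψinj : Function.Injective ψ := by
    intro u v h
    have hc : redH u ↔ redH v := by rw [← hψred u, ← hψred v, h]
    by_cases hu : redH u
    · have hv : redH v := hc.mp hu
      obtain ⟨w, j, hw⟩ := bred_form (Ψ (ι u)) (by show bred _; rw [hΨc, hcι]; exact hu)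
      obtain ⟨w', j', hw'⟩ := bred_form (Ψ (ι v)) (by show bred _; rw [hΨc, hcι]; exact hv)
      have hww' : w = w' := by
        apply Subtype.ext
        have := h
        rw [hψdef] at this
        simpa only [hw, hw', hpdef, bproj, Sum.elim_inl] using this
      subst hww'
      by_cases hj : j = j'
      · subst hj
        have : Ψ (ι u) = Ψ (ι v) := by rw [hw, hw']
        have := Ψ.toEquiv.injective this
        have := congrArg p this
        rwa [hpι, hpι] at this
      · have hadj : B.Adj (Ψ (ι u)) (Ψ (ι v)) := by
          rw [hw, hw', hBdef, blowUp_adj_inl_inl]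
          exact Or.inr ⟨rfl, hj⟩
        rw [Ψ.map_adj_iff, haι] at hadj
        exact absurd hadj (hind u v hu hv)
    · have hv : ¬ redH v := fun h' => hu (hc.mpr h')
      obtain ⟨b, hb⟩ := bblue_form (Ψ (ι u)) (by show ¬ bred _; rw [hΨc, hcι]; exact hu)
      obtain ⟨b', hb'⟩ := bblue_form (Ψ (ι v)) (by show ¬ bred _; rw [hΨc, hcι]; exact hv)
      have : b = b' := by
        apply Subtype.ext
        have := h
        rw [hψdef] at this
        simpa only [hb, hb', hpdef, bproj, Sum.elim_inr] using this
      have : Ψ (ι u) = Ψ (ι v) := by rw [hb, hb', this]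
      have := Ψ.toEquiv.injective this
      have := congrArg p this
      rwa [hpι, hpι] at this
  have hψsurj : Function.Surjective ψ := by
    intro w
    by_cases hw : redH w
    · set x := Ψ.symm (Sum.inl (⟨w, hw⟩, i₀)) with hx
      have hxr : bred x := by rw [hx, hΨc']; trivial
      obtain ⟨u, i, hui⟩ := bred_form x hxr
      refine ⟨u.1, ?_⟩
      have hΨx : Ψ x = Sum.inl (⟨w, hw⟩, i₀) := by rw [hx, Ψ.apply_symm_apply]
      have hιu : ι u.1 = Sum.inl (u, i₀) := by
        rw [hιred u.1 u.2]
      by_cases hi : i = i₀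
      · show p (Ψ (ι u.1)) = w
        rw [hιu, ← hi, ← hui, hΨx]
        simp [hpdef, bproj]
      · obtain ⟨w', j', hw'⟩ := bred_form (Ψ (ι u.1)) (by show bred _; rw [hΨc, hcι]; exact u.2)
        have hadj : B.Adj (ι u.1) x := by
          rw [hui, hιu, hBdef, blowUp_adj_inl_inl]
          exact Or.inr ⟨rfl, fun hh => hi hh.symm⟩
        have hadj2 : B.Adj (Ψ (ι u.1)) (Ψ x) := by rwa [Ψ.map_adj_iff]
        rw [hw', hΨx, hBdef, blowUp_adj_inl_inl] at hadj2
        rcases hadj2 with hadj2 | ⟨heq, _⟩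
        · exact absurd hadj2 (hind _ _ w'.2 hw)
        · show p (Ψ (ι u.1)) = w
          rw [hw', heq]
          simp [hpdef, bproj]
    · set x := Ψ.symm (Sum.inr ⟨w, hw⟩) with hx
      have hxb : ¬ bred x := by rw [hx, hΨc']; simp [hbreddef, blowUpRed]
      obtain ⟨b, hb⟩ := bblue_form x hxb
      refine ⟨b.1, ?_⟩
      show p (Ψ (ι b.1)) = w
      rw [hιblue b.1 b.2, Subtype.coe_eta, ← hb, hx, Ψ.apply_symm_apply]
      simp [hpdef, bproj]
  refine ⟨⟨Equiv.ofBijective ψ ⟨hψinj, hψsurj⟩, ?_⟩, fun v => hψred v, fun v hv => ?_⟩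
  · intro a b
    exact hψadj a b
  · show ψ v = g v
    rw [hψdef]
    show p (Ψ (ι v)) = g v
    rw [hΨe (ι v) ⟨v, hv, rfl⟩]
    show p (ι (g (p (ι v)))) = g v
    rw [hpι, hpι]

end Dir2

section Dir1
variable {V I : Type} {H : SimpleGraph V} {redH : V → Prop}

/-- Second coordinate of a blow-up vertex, with a default. -/
def bsnd (redH : V → Prop) {I : Type} :
    ({v : V // redH v} × I ⊕ {v : V // ¬ redH v}) → I → I :=
  fun x d => Sum.elim (fun q => q.2) (fun _ => d) x

lemma blowUp_uh_of_uh (hind : ∀ u v : V, redH u → redH v → ¬ H.Adj u v)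
    (hH : Ultrahomogeneous H redH) :
    Ultrahomogeneous (blowUp H redH I) (blowUpRed V redH I) := by
  classical
  intro S hS f hf
  obtain ⟨finj, fcol, fadj⟩ := hf
  -- Step 1: the first coordinate of `f` is well defined as a function of the first coordinate.
  have hfst : ∀ x ∈ S, ∀ y ∈ S, bproj redH I x = bproj redH I y →
      bproj redH I (f x) = bproj redH I (f y) := by
    rintro (⟨u, i⟩ | b) hx (⟨u', i'⟩ | b') hy hpxy
    · have huu : u = u' := Subtype.ext hpxy
      subst huu
      by_cases hii : i = i'
      · subst hii; rfl
      · have hadj : (blowUp H redH I).Adj (Sum.inl (u, i)) (Sum.inl (u, i')) := by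
          rw [blowUp_adj_inl_inl]; exact Or.inr ⟨rfl, hii⟩
        have hadj2 : (blowUp H redH I).Adj (f (Sum.inl (u, i))) (f (Sum.inl (u, i'))) :=
          (fadj _ hx _ hy).mpr hadj
        obtain ⟨w, j, hw⟩ := bred_form (f (Sum.inl (u, i))) ((fcol _ hx).mpr trivial)
        obtain ⟨w', j', hw'⟩ := bred_form (f (Sum.inl (u, i'))) ((fcol _ hy).mpr trivial)
        rw [hw, hw', blowUp_adj_inl_inl] at hadj2
        rcases hadj2 with h | ⟨hww, _⟩
        · exact absurd h (hind _ _ w.2 w'.2)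
        · rw [hw, hw', hww]
          rfl
    · have h : (u.1 : V) = b'.1 := hpxy
      exact absurd (h ▸ u.2) b'.2
    · have h : (b.1 : V) = u'.1 := hpxy
      exact absurd (h.symm ▸ u'.2) b.2
    · have : b = b' := Subtype.ext hpxy
      subst this; rfl
  -- Step 2: the induced partial map on the base graph.
  set g : V → V := fun v =>
    if h : ∃ x, x ∈ S ∧ bproj redH I x = v then bproj redH I (f h.choose) else v with hgdef
  have hg : ∀ x ∈ S, g (bproj redH I x) = bproj redH I (f x) := by
    intro x hx
    have hex : ∃ y, y ∈ S ∧ bproj redH I y = bproj redH I x := ⟨x, hx, rfl⟩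
    simp only [hgdef]
    rw [dif_pos hex]
    exact hfst _ hex.choose_spec.1 x hx hex.choose_spec.2
  have gcol : ∀ v ∈ bproj redH I '' S, redH (g v) ↔ redH v := by
    rintro _ ⟨x, hx, rfl⟩
    rw [hg x hx, redH_bproj (f x), redH_bproj x]
    exact fcol x hx
  have ginj : Set.InjOn g (bproj redH I '' S) := by
    rintro _ ⟨x, hx, rfl⟩ _ ⟨y, hy, rfl⟩ hgxy
    rw [hg x hx, hg y hy] at hgxy
    have hcolxy : blowUpRed V redH I x ↔ blowUpRed V redH I y := by
      rw [← fcol x hx, ← fcol y hy, ← redH_bproj (f x), ← redH_bproj (f y), hgxy]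
    by_cases hbx : blowUpRed V redH I x
    · obtain ⟨u, i, hux⟩ := bred_form x hbx
      obtain ⟨u', i', huy⟩ := bred_form y (hcolxy.mp hbx)
      obtain ⟨w, j, hw⟩ := bred_form (f x) ((fcol x hx).mpr hbx)
      obtain ⟨w', j', hw'⟩ := bred_form (f y) ((fcol y hy).mpr (hcolxy.mp hbx))
      have hww : w = w' := Subtype.ext (by rw [hw, hw'] at hgxy; exact hgxy)
      subst hww
      by_cases hjj : j = j'
      · have hfxy : f x = f y := by rw [hw, hw', hjj]
        rw [finj hx hy hfxy]
      · have hadj : (blowUp H redH I).Adj (f x) (f y) := by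
          rw [hw, hw', blowUp_adj_inl_inl]; exact Or.inr ⟨rfl, hjj⟩
        have hadj2 := (fadj x hx y hy).mp hadj
        rw [hux, huy, blowUp_adj_inl_inl] at hadj2
        rcases hadj2 with h | ⟨huu, _⟩
        · exact absurd h (hind _ _ u.2 u'.2)
        · rw [hux, huy, huu]
          rfl
    · obtain ⟨c, hc⟩ := bblue_form (f x) (fun hh => hbx ((fcol x hx).mp hh))
      obtain ⟨c', hc'⟩ := bblue_form (f y)
        (fun hh => hbx (hcolxy.mpr ((fcol y hy).mp hh)))
      have hcc : c = c' := Subtype.ext (by rw [hc, hc'] at hgxy; exact hgxy)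
      have hfxy : f x = f y := by rw [hc, hc', hcc]
      rw [finj hx hy hfxy]
  have gadj : ∀ u ∈ bproj redH I '' S, ∀ v ∈ bproj redH I '' S,
      (H.Adj (g u) (g v) ↔ H.Adj u v) := by
    rintro _ ⟨x, hx, rfl⟩ _ ⟨y, hy, rfl⟩
    rw [hg x hx, hg y hy]
    by_cases hbx : blowUpRed V redH I x <;> by_cases hby : blowUpRed V redH I y
    · constructor
      · intro h
        exact absurd h (hind _ _
          ((redH_bproj (f x)).mpr ((fcol x hx).mpr hbx))
          ((redH_bproj (f y)).mpr ((fcol y hy).mpr hby)))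
      · intro h
        exact absurd h (hind _ _ ((redH_bproj x).mpr hbx) ((redH_bproj y).mpr hby))
    all_goals
      rw [← adj_bproj (f x) (f y) (by rw [fcol x hx, fcol y hy]; tauto),
        fadj x hx y hy, adj_bproj x y (by tauto)]
  -- Step 3: extend `g` to an automorphism of `H`.
  obtain ⟨ψ, hψc, hψe⟩ := hH (bproj redH I '' S) (hS.image _) g ⟨ginj, gcol, gadj⟩
  -- Step 4: extend the second-coordinate maps to permutations of `I`.
  have hσ : ∀ u : {v : V // redH v}, ∃ σ : Equiv.Perm I,
      ∀ i ∈ ((fun i : I => (Sum.inl (u, i) : {v : V // redH v} × I ⊕ {v : V // ¬ redH v})) ⁻¹' S),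
        σ i = bsnd redH (f (Sum.inl (u, i))) i := by
    intro u
    refine exists_perm_extend' _ (hS.preimage ?_) _ ?_
    · intro a _ b _ h
      injection h with h
      exact congrArg Prod.snd h
    · intro i hi i' hi' heq
      obtain ⟨w, j, hw⟩ := bred_form (f (Sum.inl (u, i))) ((fcol _ hi).mpr trivial)
      obtain ⟨w', j', hw'⟩ := bred_form (f (Sum.inl (u, i'))) ((fcol _ hi').mpr trivial)
      have h1 : g u.1 = (w : V) := by
        have := hg _ hi
        rw [hw] at this
        exact this
      have h2 : g u.1 = (w' : V) := by
        have := hg _ hi'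
        rw [hw'] at this
        exact this
      have hww : w = w' := Subtype.ext (h1.symm.trans h2)
      have hjj : j = j' := by simpa only [bsnd, hw, hw', Sum.elim_inl] using heq
      have hfeq : f (Sum.inl (u, i)) = f (Sum.inl (u, i')) := by rw [hw, hw', hww, hjj]
      have := finj hi hi' hfeq
      injection this with h
      exact congrArg Prod.snd h
  choose σ hσ2 using hσ
  -- Step 5: assemble the automorphism of the blow-up.
  set ψr : {v : V // redH v} ≃ {v : V // redH v} :=
    ψ.toEquiv.subtypeEquiv (fun v => (hψc v).symm) with hψrdef
  set ψb : {v : V // ¬ redH v} ≃ {v : V // ¬ redH v} :=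
    ψ.toEquiv.subtypeEquiv (fun v => (not_congr (hψc v)).symm) with hψbdef
  set Ψe : ({v : V // redH v} × I ⊕ {v : V // ¬ redH v}) ≃
      ({v : V // redH v} × I ⊕ {v : V // ¬ redH v}) :=
    Equiv.sumCongr (Equiv.prodShear ψr σ) ψb with hΨedef
  have hΨinl : ∀ u i, Ψe (Sum.inl (u, i)) = Sum.inl (ψr u, σ u i) := fun u i => rfl
  have hΨinr : ∀ b, Ψe (Sum.inr b) = Sum.inr (ψb b) := fun b => rfl
  have hψrv : ∀ u, (ψr u).1 = ψ u.1 := fun u => rfl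
  have hψbv : ∀ b, (ψb b).1 = ψ b.1 := fun b => rfl
  have hmap : ∀ a b, (blowUp H redH I).Adj (Ψe a) (Ψe b) ↔ (blowUp H redH I).Adj a b := by
    rintro (⟨u, i⟩ | b) (⟨u', i'⟩ | b')
    · rw [hΨinl, hΨinl, blowUp_adj_inl_inl, blowUp_adj_inl_inl]
      constructor
      · rintro (h | ⟨he, hne⟩)
        · exact absurd h (hind _ _ (ψr u).2 (ψr u').2)
        · have huu : u = u' := ψr.injective he
          subst huu
          exact Or.inr ⟨rfl, fun hii => hne (by rw [hii])⟩
      · rintro (h | ⟨he, hne⟩)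
        · exact absurd h (hind _ _ u.2 u'.2)
        · subst he
          exact Or.inr ⟨rfl, fun hss => hne ((σ u).injective hss)⟩
    · rw [hΨinl, hΨinr, blowUp_adj_inl_inr, blowUp_adj_inl_inr, hψrv, hψbv]
      exact ψ.map_adj_iff
    · rw [hΨinr, hΨinl, blowUp_adj_inr_inl, blowUp_adj_inr_inl, hψrv, hψbv]
      exact ψ.map_adj_iff
    · rw [hΨinr, hΨinr, blowUp_adj_inr_inr, blowUp_adj_inr_inr, hψbv, hψbv]
      exact ψ.map_adj_iff
  refine ⟨⟨Ψe, fun {a b} => hmap a b⟩, ?_, ?_⟩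
  · rintro (⟨u, i⟩ | b)
    · exact Iff.rfl
    · exact Iff.rfl
  · rintro (⟨u, i⟩ | b) hx
    · obtain ⟨w, j, hw⟩ := bred_form (f (Sum.inl (u, i))) ((fcol _ hx).mpr trivial)
      show Ψe (Sum.inl (u, i)) = f (Sum.inl (u, i))
      rw [hΨinl, hw]
      have h1 : ψ u.1 = g u.1 := hψe u.1 ⟨Sum.inl (u, i), hx, rfl⟩
      have h2 := hg _ hx
      rw [hw] at h2
      have hwr : ψr u = w := Subtype.ext (by rw [hψrv, h1]; exact h2)
      have hj : σ u i = j := by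
        have := hσ2 u i hx
        rw [hw] at this
        exact this
      rw [hwr, hj]
    · obtain ⟨c, hc⟩ := bblue_form (f (Sum.inr b))
        (fun hh => ((fcol _ hx).mp hh : blowUpRed V redH I (Sum.inr b)))
      show Ψe (Sum.inr b) = f (Sum.inr b)
      rw [hΨinr, hc]
      have h1 : ψ b.1 = g b.1 := hψe b.1 ⟨Sum.inr b, hx, rfl⟩
      have h2 := hg _ hx
      rw [hc] at h2
      have : ψb b = c := Subtype.ext (by rw [hψbv, h1]; exact h2)
      rw [this]

end Dir1


/-- A blow-up `G` of a 2-colored graph `H` whose red class is independent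
(by `i`-cliques, `2 ≤ i ≤ ℵ₀`) is ultrahomogeneous iff `H` is ultrahomogeneous. -/
theorem stmt_0 {V W I : Type} (H : SimpleGraph V) (redH : V → Prop)
    (hind : ∀ u v : V, redH u → redH v → ¬ H.Adj u v)
    (hI2 : 2 ≤ Cardinal.mk I) (hIcnt : Cardinal.mk I ≤ Cardinal.aleph0)
    (G : SimpleGraph W) (redG : W → Prop)
    (e : G ≃g blowUp H redH I)
    (he : ∀ w, redG w ↔ blowUpRed V redH I (e w)) :
    Ultrahomogeneous G redG ↔ Ultrahomogeneous H redH := by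
  have hne : Nonempty I := by
    have h0 : (0 : Cardinal) < Cardinal.mk I := lt_of_lt_of_le (by norm_num) hI2
    exact Cardinal.mk_ne_zero_iff.mp h0.ne'
  constructor
  · intro hG
    have he' : ∀ x, blowUpRed V redH I x ↔ redG (e.symm x) := by
      intro x
      rw [he (e.symm x), RelIso.apply_symm_apply]
    exact uh_of_blowUp_uh hind (Classical.choice hne) (uh_transport e.symm he' hG)
  · intro hH
    exact uh_transport e he (blowUp_uh_of_uh hind hH)
end

section
/- Let G be a CUH graph and let H be a minimally omitted subgraph of G that is not monochromatic. For a color c ∈ {red, blue}, let H_c be the subgraph of H induced by the vertices of color c. Then for each color c one of the following holds: (i) H_c is a complete graph on n ≥ 3 vertices and the vertices of H_c are pairwise twins in H; (ii) H_c is a complete graph on 2 vertices; or (iii) H_c is an edgeless graph on n ≥ 1 vertices. -/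
open SimpleGraph

/-- The three possible shapes of a color class `C` of a minimally omitted subgraph `H`:
a clique on `n ≥ 3` vertices which are pairwise twins in `H`, a clique on 2 vertices,
or a nonempty independent set. -/
def GoodClass {W : Type} (H : SimpleGraph W) (C : Set W) : Prop :=
  (3 ≤ Nat.card C ∧ (∀ u ∈ C, ∀ v ∈ C, u ≠ v → H.Adj u v) ∧
    ∀ u ∈ C, ∀ v ∈ C, ∀ w : W, w ≠ u → w ≠ v → (H.Adj u w ↔ H.Adj v w)) ∨
  (Nat.card C = 2 ∧ ∀ u ∈ C, ∀ v ∈ C, u ≠ v → H.Adj u v) ∨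
  (C.Nonempty ∧ ∀ u ∈ C, ∀ v ∈ C, ¬ H.Adj u v)

/-!
Write `H - x` for `H` with the vertex `x` deleted. For distinct `u, w`, ultrahomogeneity lets us
glue a copy of `H - u` and a copy of `H - w` in `G` along their common part `H - u - w`. The
glued map `W → V` is correct on every pair except `{u, w}`, and since `H` is omitted it fails on
that pair: either `u` and `w` land on the same vertex, so they are twins, or their adjacency is
flipped. Adjacency is transitive inside a color class of `G`; against a flip this rules out two
monochromatic configurations in `H`: an edge together with a vertex adjacent to neither end, and
a triangle two of whose vertices are not twins. Adjacency is transitive inside a color class of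
`H` as well, since any three of its vertices miss a vertex of the other color and so span a
realized subgraph. Hence a class containing an edge is a clique, and if it has at least three
vertices these are pairwise twins.
-/

section

variable {V W : Type} {G : SimpleGraph V} {red : V → Prop} {H : SimpleGraph W}
  {redH : W → Prop}

lemma IsUnionOfCliques.adj_of_adj_of_adj
    (hR : IsUnionOfCliques G {v | red v}) (hB : IsUnionOfCliques G {v | ¬ red v})
    {x y z : V} (hxy : red x ↔ red y) (hyz : red y ↔ red z)
    (h₁ : G.Adj x y) (h₂ : G.Adj y z) (hxz : x ≠ z) : G.Adj x z := by
  by_cases hx : red x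
  · exact hR x hx y (hxy.mp hx) z (hyz.mp (hxy.mp hx)) h₁ h₂ hxz
  · exact hB x hx y (mt hxy.mpr hx) z (mt (hxy.trans hyz).mpr hx) h₁ h₂ hxz

lemma IsUnionOfCliques.isClique_of_adj {C : Set W} (htrans : IsUnionOfCliques H C)
    (hcover : ∀ x ∈ C, ∀ y ∈ C, ∀ z ∈ C, H.Adj x y → H.Adj x z ∨ H.Adj y z)
    {u v : W} (hu : u ∈ C) (hv : v ∈ C) (huv : H.Adj u v) : H.IsClique C := by
  have hadj_u : ∀ t ∈ C, t ≠ u → H.Adj t u := by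
    intro t ht htu
    rcases hcover u hu v hv t ht huv with h | h
    · exact h.symm
    · exact htrans t ht v hv u hu h.symm huv.symm htu
  intro a ha b hb hab
  rcases eq_or_ne a u with rfl | hau
  · exact (hadj_u b hb (Ne.symm hab)).symm
  rcases eq_or_ne b u with rfl | hbu
  · exact hadj_u a ha hau
  exact htrans a ha u hu b hb (hadj_u a ha hau) (hadj_u b hb hbu).symm hab

structure IsEmbeddingOn (G : SimpleGraph V) (red : V → Prop) (H : SimpleGraph W)
    (redH : W → Prop) (S : Set W) (g : W → V) : Prop where
  injOn : Set.InjOn g S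
  red_iff : ∀ x ∈ S, red (g x) ↔ redH x
  adj_iff : ∀ x ∈ S, ∀ y ∈ S, G.Adj (g x) (g y) ↔ H.Adj x y

namespace IsEmbeddingOn

variable {S : Set W} {g g' : W → V}

lemma congr (hg : IsEmbeddingOn G red H redH S g) (h : Set.EqOn g g' S) :
    IsEmbeddingOn G red H redH S g' where
  injOn := hg.injOn.congr h
  red_iff x hx := h hx ▸ hg.red_iff x hx
  adj_iff x hx y hy := h hx ▸ h hy ▸ hg.adj_iff x hx y hy

lemma comp_iso (hg : IsEmbeddingOn G red H redH S g) (ψ : G ≃g G)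
    (hψ : ∀ v, red (ψ v) ↔ red v) : IsEmbeddingOn G red H redH S (ψ ∘ g) where
  injOn := ψ.injective.comp_injOn hg.injOn
  red_iff x hx := (hψ _).trans (hg.red_iff x hx)
  adj_iff x hx y hy := ψ.map_adj_iff.trans (hg.adj_iff x hx y hy)

lemma realizes (hg : IsEmbeddingOn G red H redH Set.univ g) : Realizes G red H redH :=
  ⟨g, Set.injOn_univ.mp hg.injOn, fun x => hg.red_iff x trivial,
    fun x y => hg.adj_iff x trivial y trivial⟩

lemma red_iff_of_compl_singleton {u w : W} (huw : u ≠ w)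
    (hu : IsEmbeddingOn G red H redH {u}ᶜ g) (hw : IsEmbeddingOn G red H redH {w}ᶜ g) (x : W) :
    red (g x) ↔ redH x := by
  rcases eq_or_ne x u with rfl | hxu
  · exact hw.red_iff x huw
  · exact hu.red_iff x hxu

lemma univ_of_compl_singleton {u w : W} (hu : IsEmbeddingOn G red H redH {u}ᶜ g)
    (hw : IsEmbeddingOn G red H redH {w}ᶜ g) (hne : g u ≠ g w)
    (hadj : G.Adj (g u) (g w) ↔ H.Adj u w) : IsEmbeddingOn G red H redH Set.univ g := by
  have huw : u ≠ w := fun h => hne (congrArg g h)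
  have hpair : ∀ x y : W,
      (x ≠ u ∧ y ≠ u) ∨ (x ≠ w ∧ y ≠ w) ∨ (x = u ∧ y = w) ∨ (x = w ∧ y = u) := by
    grind
  refine ⟨fun x _ y _ hxy => ?_, fun x _ => red_iff_of_compl_singleton huw hu hw x,
    fun x _ y _ => ?_⟩
  · rcases hpair x y with ⟨hx, hy⟩ | ⟨hx, hy⟩ | ⟨rfl, rfl⟩ | ⟨rfl, rfl⟩
    · exact hu.injOn hx hy hxy
    · exact hw.injOn hx hy hxy
    · exact absurd hxy hne
    · exact absurd hxy.symm hne
  · rcases hpair x y with ⟨hx, hy⟩ | ⟨hx, hy⟩ | ⟨rfl, rfl⟩ | ⟨rfl, rfl⟩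
    · exact hu.adj_iff x hx y hy
    · exact hw.adj_iff x hx y hy
    · exact hadj
    · rw [G.adj_comm, H.adj_comm]
      exact hadj

lemma adj_of_adj_of_adj (hg : IsEmbeddingOn G red H redH S g)
    (hR : IsUnionOfCliques G {v | red v}) (hB : IsUnionOfCliques G {v | ¬ red v})
    {x y z : W} (hx : x ∈ S) (hy : y ∈ S) (hz : z ∈ S)
    (hxy : redH x ↔ redH y) (hyz : redH y ↔ redH z)
    (h₁ : H.Adj x y) (h₂ : H.Adj y z) (hxz : x ≠ z) : H.Adj x z := by
  refine (hg.adj_iff x hx z hz).mp (hR.adj_of_adj_of_adj hB ?_ ?_ ((hg.adj_iff x hx y hy).mpr h₁)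
    ((hg.adj_iff y hy z hz).mpr h₂) fun h => hxz (hg.injOn hx hz h))
  · rw [hg.red_iff x hx, hg.red_iff y hy]
    exact hxy
  · rw [hg.red_iff y hy, hg.red_iff z hz]
    exact hyz

end IsEmbeddingOn

lemma Realizes.exists_isEmbeddingOn [Nonempty V] {S : Set W}
    (h : Realizes G red (H.induce S) (fun x => redH x.1)) :
    ∃ g, IsEmbeddingOn G red H redH S g := by
  classical
  obtain ⟨f, hf, hred, hadj⟩ := h
  let g : W → V := fun x => if hx : x ∈ S then f ⟨x, hx⟩ else Classical.arbitrary V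
  have hg : ∀ x (hx : x ∈ S), g x = f ⟨x, hx⟩ := fun x hx => dif_pos hx
  refine ⟨g, fun x hx y hy hxy => ?_, fun x hx => ?_, fun x hx y hy => ?_⟩
  · rw [hg x hx, hg y hy] at hxy
    exact congrArg Subtype.val (hf hxy)
  · rw [hg x hx]
    exact hred _
  · rw [hg x hx, hg y hy]
    exact hadj _ _

lemma Ultrahomogeneous.exists_isEmbeddingOn_of_inter (hG : Ultrahomogeneous G red)
    {S₁ S₂ : Set W} (hfin : (S₁ ∩ S₂).Finite) {g₁ g₂ : W → V}
    (h₁ : IsEmbeddingOn G red H redH S₁ g₁) (h₂ : IsEmbeddingOn G red H redH S₂ g₂) :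
    ∃ g, IsEmbeddingOn G red H redH S₁ g ∧ IsEmbeddingOn G red H redH S₂ g := by
  classical
  set T := S₁ ∩ S₂
  let φ : V → V := Function.extend (T.domRestrict g₂) (T.domRestrict g₁) id
  have hφ : ∀ x ∈ T, φ (g₂ x) = g₁ x := fun x hx =>
    (h₂.injOn.mono Set.inter_subset_right).injective.extend_apply _ _ ⟨x, hx⟩
  have hpi : IsPartialIso G red (g₂ '' T) φ := by
    refine ⟨?_, ?_, ?_⟩
    · rintro _ ⟨x, hx, rfl⟩ _ ⟨y, hy, rfl⟩ hxy
      rw [hφ x hx, hφ y hy] at hxy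
      rw [h₁.injOn hx.1 hy.1 hxy]
    · rintro _ ⟨x, hx, rfl⟩
      rw [hφ x hx, h₁.red_iff x hx.1, h₂.red_iff x hx.2]
    · rintro _ ⟨x, hx, rfl⟩ _ ⟨y, hy, rfl⟩
      rw [hφ x hx, hφ y hy, h₁.adj_iff x hx.1 y hy.1, h₂.adj_iff x hx.2 y hy.2]
  obtain ⟨ψ, hψred, hψφ⟩ := hG _ (hfin.image g₂) φ hpi
  refine ⟨fun x => if x ∈ S₁ then g₁ x else ψ (g₂ x),
    h₁.congr fun x hx => (if_pos hx).symm, (h₂.comp_iso ψ hψred).congr fun x hx => ?_⟩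
  by_cases hx₁ : x ∈ S₁
  · simp only [Function.comp_apply, if_pos hx₁]
    rw [hψφ _ (Set.mem_image_of_mem g₂ ⟨hx₁, hx⟩), hφ x ⟨hx₁, hx⟩]
  · simp only [Function.comp_apply, if_neg hx₁]

lemma MinOmitted.exists_eq_or_adj_iff_not [Finite W] [Nonempty V]
    (hG : Ultrahomogeneous G red) (hmin : MinOmitted G red H redH) (u w : W) :
    ∃ g, IsEmbeddingOn G red H redH {u}ᶜ g ∧ IsEmbeddingOn G red H redH {w}ᶜ g ∧
      (g u = g w ∨ (G.Adj (g u) (g w) ↔ ¬ H.Adj u w)) := by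
  have hproper : ∀ x : W, ({x}ᶜ : Set W) ≠ Set.univ := fun x =>
    Set.compl_ne_univ.mpr (Set.singleton_nonempty x)
  obtain ⟨g₁, h₁⟩ := (hmin.2 _ (hproper u)).exists_isEmbeddingOn
  obtain ⟨g₂, h₂⟩ := (hmin.2 _ (hproper w)).exists_isEmbeddingOn
  obtain ⟨g, hu, hw⟩ := hG.exists_isEmbeddingOn_of_inter (Set.toFinite _) h₁ h₂
  refine ⟨g, hu, hw, or_iff_not_imp_left.mpr fun hne => ?_⟩
  by_contra hflip
  exact hmin.1 (hu.univ_of_compl_singleton hw hne (by tauto)).realizes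

namespace MinOmitted

lemma adj_trans_of_sameColor (hG : IsCUH G red) (hmin : MinOmitted G red H redH)
    {u v w z : W} (huv : redH u ↔ redH v) (hvw : redH v ↔ redH w)
    (hz : ¬ (redH z ↔ redH u)) (h₁ : H.Adj u v) (h₂ : H.Adj v w) (huw : u ≠ w) :
    H.Adj u w := by
  obtain ⟨-, hV, -, hR, hB⟩ := hG
  have := hV.nonempty
  have hproper : ({u, v, w} : Set W) ≠ Set.univ := by
    intro h
    have hz' : z ∈ ({u, v, w} : Set W) := h ▸ Set.mem_univ z
    rcases hz' with rfl | rfl | rfl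
    · exact hz Iff.rfl
    · exact hz huv.symm
    · exact hz (huv.trans hvw).symm
  obtain ⟨g, hg⟩ := (hmin.2 _ hproper).exists_isEmbeddingOn
  exact hg.adj_of_adj_of_adj hR hB (by simp) (by simp) (by simp) huv hvw h₁ h₂ huw

lemma adj_or_adj_of_adj [Finite W] (hG : IsCUH G red) (hmin : MinOmitted G red H redH)
    {u v w : W} (huv : redH u ↔ redH v) (huw : redH u ↔ redH w)
    (h : H.Adj u v) : H.Adj u w ∨ H.Adj v w := by
  by_contra! hw
  obtain ⟨hnuw, hnvw⟩ := hw
  have hwu : w ≠ u := by rintro rfl; exact hnvw h.symm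
  have hwv : w ≠ v := by rintro rfl; exact hnuw h
  have hvu : v ≠ u := h.ne.symm
  obtain ⟨-, hV, hUH, hR, hB⟩ := hG
  have := hV.nonempty
  obtain ⟨g, hgu, hgw, hglue⟩ := hmin.exists_eq_or_adj_iff_not hUH u w
  have hAuv : G.Adj (g u) (g v) := (hgw.adj_iff u hwu.symm v hwv.symm).mpr h
  have hnAvw : ¬ G.Adj (g v) (g w) := fun h' => hnvw ((hgu.adj_iff v hvu w hwu).mp h')
  rcases eq_or_ne (g u) (g w) with heq | hne
  · exact hnAvw (heq ▸ hAuv.symm)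
  have hred := hgu.red_iff_of_compl_singleton hwu.symm hgw
  have hAuw : G.Adj (g u) (g w) := (hglue.resolve_left hne).mpr hnuw
  exact hnAvw (hR.adj_of_adj_of_adj hB (by rwa [hred, hred, Iff.comm]) (by rwa [hred, hred])
    hAuv.symm hAuw fun h' => hwv (hgu.injOn hvu hwu h').symm)

lemma adj_iff_adj_of_triangle [Finite W] (hG : IsCUH G red) (hmin : MinOmitted G red H redH)
    {p q x r : W} (hpq : redH p ↔ redH q) (hpx : redH p ↔ redH x)
    (hApq : H.Adj p q) (hApx : H.Adj p x) (hAqx : H.Adj q x) (hrp : r ≠ p) (hrq : r ≠ q) :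
    H.Adj p r ↔ H.Adj q r := by
  obtain ⟨-, hV, hUH, hR, hB⟩ := hG
  have := hV.nonempty
  obtain ⟨g, hgp, hgq, hglue⟩ := hmin.exists_eq_or_adj_iff_not hUH p q
  rcases eq_or_ne (g p) (g q) with heq | hne
  · rw [← hgq.adj_iff p hApq.ne r hrq, ← hgp.adj_iff q hApq.ne.symm r hrp, heq]
  have hred := hgp.red_iff_of_compl_singleton hApq.ne hgq
  have hApx' : G.Adj (g p) (g x) := (hgq.adj_iff p hApq.ne x hAqx.ne.symm).mpr hApx
  have hAxq' : G.Adj (g x) (g q) := (hgp.adj_iff x hApx.ne.symm q hApq.ne.symm).mpr hAqx.symm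
  have hApq' : G.Adj (g p) (g q) := hR.adj_of_adj_of_adj hB (by rwa [hred, hred])
    (by rw [hred, hred]; exact hpx.symm.trans hpq) hApx' hAxq' hne
  exact absurd hApq ((hglue.resolve_left hne).mp hApq')

lemma goodClass [Finite W] (hG : IsCUH G red) (hmin : MinOmitted G red H redH) {C : Set W}
    (hC : ∀ x ∈ C, ∀ y ∈ C, redH x ↔ redH y) {z : W} (hz : ∀ x ∈ C, ¬ (redH z ↔ redH x))
    (hne : C.Nonempty) : GoodClass H C := by
  by_cases hE : ∃ u ∈ C, ∃ v ∈ C, H.Adj u v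
  swap
  · push Not at hE
    exact Or.inr (Or.inr ⟨hne, hE⟩)
  obtain ⟨u, hu, v, hv, huv⟩ := hE
  have htrans : IsUnionOfCliques H C := fun x hx y hy w hw =>
    hmin.adj_trans_of_sameColor hG (hC x hx y hy) (hC y hy w hw) (hz x hx)
  have hclique : H.IsClique C := htrans.isClique_of_adj
    (fun x hx y hy w hw => hmin.adj_or_adj_of_adj hG (hC x hx y hy) (hC x hx w hw)) hu hv huv
  have hcard : 2 ≤ Nat.card C := by
    rw [Nat.card_coe_set_eq, ← Set.ncard_pair huv.ne]
    exact Set.ncard_le_ncard (Set.insert_subset hu (Set.singleton_subset_iff.mpr hv))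
  rcases hcard.eq_or_lt with h2 | h3
  · exact Or.inr (Or.inl ⟨h2.symm, fun a ha b hb => hclique ha hb⟩)
  refine Or.inl ⟨h3, fun a ha b hb => hclique ha hb, fun p hp q hq r hrp hrq => ?_⟩
  rcases eq_or_ne p q with rfl | hpq
  · rfl
  obtain ⟨x, hx, hxpq⟩ := Set.exists_mem_notMem_of_ncard_lt_ncard (s := {p, q}) (t := C)
    (by rwa [Set.ncard_pair hpq, ← Nat.card_coe_set_eq])
  simp only [Set.mem_insert_iff, Set.mem_singleton_iff, not_or] at hxpq
  exact hmin.adj_iff_adj_of_triangle hG (hC p hp q hq) (hC p hp x hx) (hclique hp hq hpq)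
    (hclique hp hx (Ne.symm hxpq.1)) (hclique hq hx (Ne.symm hxpq.2)) hrp hrq

end MinOmitted

end

/-- the color classes of a non-monochromatic minimally omitted subgraph of a
CUH graph are of one of the three shapes above. -/
theorem stmt_2 {V W : Type} [Fintype W] (G : SimpleGraph V) (red : V → Prop)
    (hG : IsCUH G red) (H : SimpleGraph W) (redH : W → Prop)
    (hmin : MinOmitted G red H redH)
    (h1 : ∃ w, redH w) (h2 : ∃ w, ¬ redH w) :
    GoodClass H {w | redH w} ∧ GoodClass H {w | ¬ redH w} := by
  obtain ⟨r, hr⟩ := h1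
  obtain ⟨b, hb⟩ := h2
  exact ⟨hmin.goodClass hG (fun x hx y hy => iff_of_true hx hy) (z := b)
      (fun x hx h => hb (h.mpr hx)) ⟨r, hr⟩,
    hmin.goodClass hG (fun x hx y hy => iff_of_false hx hy) (z := r)
      (fun x hx h => hx (h.mp hr)) ⟨b, hb⟩⟩
end

section
/- Let G be a basic CUH graph. If both D and D̃ are realized in G (i.e., both occur as induced subgraphs of G), then G is piecewise ultrahomogeneous, i.e., for every maximal red clique M_R and every maximal blue clique M_B, the induced subgraph G[M_R ∪ M_B] is ultrahomogeneous. -/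
open SimpleGraph

/-!
Inside a piece `G[M_R ∪ M_B]`, a partial isomorphism `f` whose domain meets both colors extends,
by ultrahomogeneity, to an automorphism of `G` sending a vertex of `M_R` into `M_R` and a vertex
of `M_B` into `M_B`; since maximal cliques of a union of cliques are its components, this
automorphism stabilizes both cliques and restricts to the piece. A monochromatic `f`, say inside
`M_B`, is realized one vertex at a time: to move `b` to `b'` while fixing finitely many vertices
of `M_B`, it suffices to find `r ∈ M_R` adjacent to both or to neither of `b, b'`, and then to
extend the mixed partial isomorphism exchanging `b` and `b'` and fixing `r`. Such an `r` exists
because `D` is realized: if `r₀ ∈ M_R` is adjacent to `b` but not to `b'`, then `r₀ b b'` is a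
copy of `D` minus a red vertex, whose image under ultrahomogeneity completes it to a copy of `D`.
The red case follows by exchanging the colors, which maps `D` to itself.
-/

open Function Set

variable {V : Type} {G : SimpleGraph V} {red : V → Prop}

lemma IsPartialIso.compl_colors {S : Set V} {f : V → V} (h : IsPartialIso G red S f) :
    IsPartialIso G (fun v => ¬ red v) S f :=
  ⟨h.1, fun v hv => not_congr (h.2.1 v hv), h.2.2⟩

lemma Ultrahomogeneous.compl_colors (h : Ultrahomogeneous G red) :
    Ultrahomogeneous G (fun v => ¬ red v) := by
  intro S hS f hf
  obtain ⟨ψ, hψc, hψf⟩ := h S hS f (by simpa only [not_not] using hf.compl_colors)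
  exact ⟨ψ, fun v => not_congr (hψc v), hψf⟩

lemma isPartialIso_image {ι : Type} {e : ι → V} {S : Set ι} {f : V → V}
    (hinj : InjOn (f ∘ e) S) (hc : ∀ i ∈ S, red (f (e i)) ↔ red (e i))
    (ha : ∀ i ∈ S, ∀ j ∈ S, G.Adj (f (e i)) (f (e j)) ↔ G.Adj (e i) (e j)) :
    IsPartialIso G red (e '' S) f := by
  refine ⟨?_, ?_, ?_⟩
  · rintro _ ⟨i, hi, rfl⟩ _ ⟨j, hj, rfl⟩ hij
    rw [hinj hi hj hij]
  · rintro _ ⟨i, hi, rfl⟩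
    exact hc i hi
  · rintro _ ⟨i, hi, rfl⟩ _ ⟨j, hj, rfl⟩
    exact ha i hi j hj

lemma Ultrahomogeneous.exists_apply_eq {ι : Type} [Finite ι] (h : Ultrahomogeneous G red)
    {x y : ι → V} (hx : Injective x) (hy : Injective y) (hc : ∀ i, red (y i) ↔ red (x i))
    (ha : ∀ i j, G.Adj (y i) (y j) ↔ G.Adj (x i) (x j)) :
    ∃ ψ : G ≃g G, (∀ v, red (ψ v) ↔ red v) ∧ ∀ i, ψ (x i) = y i := by
  have hf : ∀ i, extend x y id (x i) = y i := hx.extend_apply y id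
  have hpi : IsPartialIso G red (x '' univ) (extend x y id) := by
    refine isPartialIso_image (fun i _ j _ hij => hy ?_) (fun i _ => ?_) (fun i _ j _ => ?_)
    · simpa only [comp_apply, hf] using hij
    · rw [hf]
      exact hc i
    · rw [hf, hf]
      exact ha i j
  obtain ⟨ψ, hψc, hψf⟩ := h _ (toFinite _) _ hpi
  exact ⟨ψ, hψc, fun i => (hψf _ (mem_image_of_mem x (mem_univ i))).trans (hf i)⟩

lemma ultrahomogeneous_induce_of_forall_extend {W : Set V}
    (h : ∀ S ⊆ W, S.Finite → ∀ f, IsPartialIso G red S f → MapsTo f S W →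
      ∃ ψ : G ≃g G, (∀ v, red (ψ v) ↔ red v) ∧ (∀ v, ψ v ∈ W ↔ v ∈ W) ∧ EqOn ψ f S) :
    Ultrahomogeneous (G.induce W) (fun x => red x.1) := by
  intro S hS f ⟨hinj, hc, ha⟩
  set f' : V → V := extend Subtype.val (fun x => (f x : V)) id
  have hf' : ∀ x : W, f' x = f x := Subtype.val_injective.extend_apply _ _
  have hpi : IsPartialIso G red (Subtype.val '' S) f' := by
    refine isPartialIso_image (fun x hx y hy hxy => ?_) (fun x hx => ?_) (fun x hx y hy => ?_)
    · simp only [comp_apply, hf'] at hxy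
      exact hinj hx hy (Subtype.ext hxy)
    · rw [hf']
      exact hc x hx
    · rw [hf', hf']
      exact ha x hx y hy
  have hf'W : MapsTo f' (Subtype.val '' S) W := by
    rintro _ ⟨x, -, rfl⟩
    rw [hf']
    exact (f x).2
  obtain ⟨ψ, hψc, hψW, hψf⟩ :=
    h _ (image_subset_iff.2 fun x _ => x.2) (hS.image _) f' hpi hf'W
  exact ⟨⟨ψ.toEquiv.subtypeEquiv fun v => (hψW v).symm, ψ.map_adj_iff⟩, fun x => hψc x,
    fun x hx => Subtype.ext ((hψf ⟨x, hx, rfl⟩).trans (hf' x))⟩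

lemma isPartialIso_swap [DecidableEq V] {S : Set V} {b b' : V} (hb' : ∀ v ∈ S, v ≠ b → v ≠ b')
    (hc : red b' ↔ red b) (ha : ∀ v ∈ S, v ≠ b → (G.Adj b' v ↔ G.Adj b v)) :
    IsPartialIso G red S (Equiv.swap b b') := by
  have hfix : ∀ v ∈ S, v ≠ b → Equiv.swap b b' v = v := fun v hv hvb =>
    Equiv.swap_apply_of_ne_of_ne hvb (hb' v hv hvb)
  refine ⟨(Equiv.injective _).injOn, fun v hv => ?_, fun u hu v hv => ?_⟩
  · rcases eq_or_ne v b with rfl | hvb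
    · rwa [Equiv.swap_apply_left]
    · rw [hfix v hv hvb]
  · by_cases hub : u = b <;> by_cases hvb : v = b
    · subst hub hvb
      simp
    · rw [hub, Equiv.swap_apply_left, hfix v hv hvb]
      exact ha v hv hvb
    · rw [hvb, Equiv.swap_apply_left, hfix u hu hub, G.adj_comm, G.adj_comm u]
      exact ha u hu hub
    · rw [hfix u hu hub, hfix v hv hvb]

lemma Realizes.Dgraph_compl_colors (h : Realizes G red Dgraph Dred) :
    Realizes G (fun v => ¬ red v) Dgraph Dred := by
  obtain ⟨g, hg, hc, ha⟩ := h
  -- `(0 2)(1 3)` is an automorphism of `D` exchanging the colors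
  let σ : Fin 4 → Fin 4 := ![2, 3, 0, 1]
  have hσ : Injective σ := by decide
  refine ⟨g ∘ σ, hg.comp hσ, fun w => ?_, fun u w => ?_⟩
  · simp only [comp_apply, hc]
    fin_cases w <;> simp [σ, Dred]
  · rw [comp_apply, comp_apply, ha]
    fin_cases u <;> fin_cases w <;> simp [σ, Dgraph]

lemma IsMaxCliqueIn.mem_iff {P M : Set V} (hU : IsUnionOfCliques G P)
    (hM : IsMaxCliqueIn G P M) {r : V} (hr : r ∈ M) {v : V} :
    v ∈ M ↔ v ∈ P ∧ (v = r ∨ G.Adj v r) := by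
  suffices M = {v | v ∈ P ∧ (v = r ∨ G.Adj v r)} by rw [this]; rfl
  refine hM.2.2 _ (fun v hv => hv.1) ?_ fun v hv => ⟨hM.1 hv, ?_⟩
  · rintro u ⟨hu, rfl | hur⟩ w ⟨hw, rfl | hwr⟩ huw
    · exact absurd rfl huw
    · exact hwr.symm
    · exact hur
    · exact hU u hu r (hM.1 hr) w hw hur hwr.symm huw
  · exact (eq_or_ne v r).imp_right (hM.2.1 hv hr)

lemma IsMaxCliqueIn.nonempty {P M : Set V} (hM : IsMaxCliqueIn G P M) {x : V} (hx : x ∈ P) :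
    M.Nonempty := by
  refine nonempty_iff_ne_empty.2 fun hMe => singleton_ne_empty x ?_
  rw [← hMe]
  exact (hM.2.2 {x} (singleton_subset_iff.2 hx) (pairwise_singleton x G.Adj)
    (by simp [hMe])).symm

lemma IsMaxCliqueIn.map_mem_iff {P M : Set V} (hU : IsUnionOfCliques G P)
    (hM : IsMaxCliqueIn G P M) (ψ : G ≃g G) (hP : ∀ v, ψ v ∈ P ↔ v ∈ P) {x : V} (hx : x ∈ M)
    (hψx : ψ x ∈ M) (v : V) : ψ v ∈ M ↔ v ∈ M := by
  rw [hM.mem_iff hU hψx, hM.mem_iff hU hx, hP, ψ.injective.eq_iff, ψ.map_adj_iff]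

structure IsPiece (G : SimpleGraph V) (red : V → Prop) (MR MB : Set V) : Prop where
  ultrahomogeneous : Ultrahomogeneous G red
  red_cliques : IsUnionOfCliques G {v | red v}
  blue_cliques : IsUnionOfCliques G {v | ¬ red v}
  maxRed : IsMaxCliqueIn G {v | red v} MR
  maxBlue : IsMaxCliqueIn G {v | ¬ red v} MB

def StabilizesPiece (red : V → Prop) (MR MB : Set V) (ψ : G ≃g G) : Prop :=
  (∀ v, red (ψ v) ↔ red v) ∧ (∀ v, ψ v ∈ MR ↔ v ∈ MR) ∧ ∀ v, ψ v ∈ MB ↔ v ∈ MB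

lemma StabilizesPiece.refl {MR MB : Set V} : StabilizesPiece red MR MB (RelIso.refl G.Adj) :=
  ⟨fun _ => Iff.rfl, fun _ => Iff.rfl, fun _ => Iff.rfl⟩

lemma StabilizesPiece.trans {MR MB : Set V} {ψ μ : G ≃g G} (hψ : StabilizesPiece red MR MB ψ)
    (hμ : StabilizesPiece red MR MB μ) : StabilizesPiece red MR MB (ψ.trans μ) :=
  ⟨fun v => (hμ.1 _).trans (hψ.1 v), fun v => (hμ.2.1 _).trans (hψ.2.1 v),
    fun v => (hμ.2.2 _).trans (hψ.2.2 v)⟩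

lemma StabilizesPiece.of_compl_colors {MR MB : Set V} {ψ : G ≃g G}
    (h : StabilizesPiece (fun v => ¬ red v) MB MR ψ) : StabilizesPiece red MR MB ψ :=
  ⟨fun v => not_iff_not.1 (h.1 v), h.2.2, h.2.1⟩

-- `r₀ p q` is a copy of `D` minus the red vertex `0`; ultrahomogeneity completes it to a copy
-- of `D`, whose vertex `0` is a red neighbour of `r₀` adjacent to `p` and `q`.
lemma exists_mem_adj_adj_of_realizes_Dgraph {MR : Set V} (hUH : Ultrahomogeneous G red)
    (hUR : IsUnionOfCliques G {v | red v}) (hMR : IsMaxCliqueIn G {v | red v} MR)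
    (hD : Realizes G red Dgraph Dred) {r₀ p q : V} (hr₀ : r₀ ∈ MR) (hp : ¬ red p)
    (hq : ¬ red q) (hpq : G.Adj p q) (hr₀p : G.Adj r₀ p) (hr₀q : ¬ G.Adj r₀ q) :
    ∃ r ∈ MR, G.Adj r p ∧ G.Adj r q := by
  obtain ⟨g, hg, hgc, hga⟩ := hD
  have hr₀red : red r₀ := hMR.1 hr₀
  have hr₀p' : r₀ ≠ p := fun h => hp (h ▸ hr₀red)
  have hr₀q' : r₀ ≠ q := fun h => hq (h ▸ hr₀red)
  have hy : Injective ![r₀, p, q] := by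
    intro i j hij
    fin_cases i <;> fin_cases j <;> simp_all [hr₀p'.symm, hr₀q'.symm, hpq.ne, hpq.ne.symm]
  obtain ⟨ψ, hψc, hψ⟩ := hUH.exists_apply_eq (x := g ∘ Fin.succ) (hg.comp (Fin.succ_injective 3))
    hy (fun i => by fin_cases i <;> simp [hgc, Dred, hr₀red, hp, hq])
    (fun i j => by
      fin_cases i <;> fin_cases j <;>
        simp [hga, Dgraph, hr₀p, hr₀q, hpq, hr₀p.symm, hpq.symm, G.adj_comm q r₀])
  have hψ1 : ψ (g 1) = r₀ := hψ 0
  have hψ2 : ψ (g 2) = p := hψ 1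
  have hψ3 : ψ (g 3) = q := hψ 2
  have hadj : ∀ i j, Dgraph.Adj i j → G.Adj (ψ (g i)) (ψ (g j)) := fun i j h =>
    ψ.map_adj_iff.2 ((hga i j).2 h)
  refine ⟨ψ (g 0), (hMR.mem_iff hUR hr₀).2 ⟨?_, Or.inr ?_⟩, ?_, ?_⟩
  · exact (hψc _).2 ((hgc 0).2 (Or.inl rfl))
  · exact hψ1 ▸ hadj 0 1 (by simp [Dgraph])
  · exact hψ2 ▸ hadj 0 2 (by simp [Dgraph])
  · exact hψ3 ▸ hadj 0 3 (by simp [Dgraph])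

lemma exists_mem_adj_iff_adj_of_realizes_Dgraph {MR MB : Set V}
    (hUH : Ultrahomogeneous G red) (hUR : IsUnionOfCliques G {v | red v})
    (hMR : IsMaxCliqueIn G {v | red v} MR) (hMB : IsMaxCliqueIn G {v | ¬ red v} MB)
    (hD : Realizes G red Dgraph Dred) {b b' : V} (hb : b ∈ MB) (hb' : b' ∈ MB) :
    ∃ r ∈ MR, (G.Adj r b ↔ G.Adj r b') := by
  obtain ⟨r₀, hr₀⟩ : MR.Nonempty := by
    obtain ⟨g, -, hgc, -⟩ := hD
    exact hMR.nonempty ((hgc 0).2 (Or.inl rfl))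
  by_cases h : G.Adj r₀ b ↔ G.Adj r₀ b'
  · exact ⟨r₀, hr₀, h⟩
  have hbb' : G.Adj b b' := hMB.2.1 hb hb' fun hbb' => h (hbb' ▸ Iff.rfl)
  by_cases hr₀b : G.Adj r₀ b
  · obtain ⟨r, hr, hrb, hrb'⟩ := exists_mem_adj_adj_of_realizes_Dgraph hUH hUR hMR hD hr₀
      (hMB.1 hb) (hMB.1 hb') hbb' hr₀b fun hr₀b' => h (iff_of_true hr₀b hr₀b')
    exact ⟨r, hr, iff_of_true hrb hrb'⟩
  · obtain ⟨r, hr, hrb', hrb⟩ := exists_mem_adj_adj_of_realizes_Dgraph hUH hUR hMR hD hr₀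
      (hMB.1 hb') (hMB.1 hb) hbb'.symm (not_not.1 fun hr₀b' => h (iff_of_false hr₀b hr₀b')) hr₀b
    exact ⟨r, hr, iff_of_true hrb hrb'⟩

namespace IsPiece

variable {MR MB : Set V}

lemma compl_colors (hP : IsPiece G red MR MB) : IsPiece G (fun v => ¬ red v) MB MR where
  ultrahomogeneous := hP.ultrahomogeneous.compl_colors
  red_cliques := hP.blue_cliques
  blue_cliques := by simpa only [not_not] using hP.red_cliques
  maxRed := hP.maxBlue
  maxBlue := by simpa only [not_not] using hP.maxRed

lemma mem_left_of_red (hP : IsPiece G red MR MB) {x : V} (hx : x ∈ MR ∪ MB) (hr : red x) :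
    x ∈ MR :=
  hx.resolve_right fun hB => hP.maxBlue.1 hB hr

lemma mem_right_of_not_red (hP : IsPiece G red MR MB) {x : V} (hx : x ∈ MR ∪ MB)
    (hb : ¬ red x) : x ∈ MB :=
  hx.resolve_left fun hR => hb (hP.maxRed.1 hR)

lemma exists_stabilizesPiece_of_mixed (hP : IsPiece G red MR MB) {S : Set V} (hS : S.Finite)
    {f : V → V} (hf : IsPartialIso G red S f) (hSW : S ⊆ MR ∪ MB) (hfW : MapsTo f S (MR ∪ MB))
    {x y : V} (hx : x ∈ S) (hxr : red x) (hy : y ∈ S) (hyb : ¬ red y) :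
    ∃ ψ : G ≃g G, StabilizesPiece red MR MB ψ ∧ EqOn ψ f S := by
  obtain ⟨ψ, hψc, hψf⟩ := hP.ultrahomogeneous S hS f hf
  have hψx : ψ x ∈ MR := by
    rw [hψf x hx]
    exact hP.mem_left_of_red (hfW hx) ((hf.2.1 x hx).2 hxr)
  have hψy : ψ y ∈ MB := by
    rw [hψf y hy]
    exact hP.mem_right_of_not_red (hfW hy) (not_congr (hf.2.1 y hy) |>.2 hyb)
  refine ⟨ψ, ⟨hψc, ?_, ?_⟩, hψf⟩
  · exact hP.maxRed.map_mem_iff hP.red_cliques ψ hψc (hP.mem_left_of_red (hSW hx) hxr) hψx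
  · exact hP.maxBlue.map_mem_iff hP.blue_cliques ψ (fun v => not_congr (hψc v))
      (hP.mem_right_of_not_red (hSW hy) hyb) hψy

lemma exists_stabilizesPiece_apply_eq_fixing (hP : IsPiece G red MR MB)
    (hD : Realizes G red Dgraph Dred) {T : Set V} (hT : T.Finite) (hTB : T ⊆ MB) {b b' : V}
    (hb : b ∈ MB) (hb' : b' ∈ MB) (hbT : b ∉ T) (hb'T : b' ∉ T) :
    ∃ ψ : G ≃g G, StabilizesPiece red MR MB ψ ∧ (∀ t ∈ T, ψ t = t) ∧ ψ b = b' := by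
  classical
  obtain ⟨r, hr, hr_adj⟩ := exists_mem_adj_iff_adj_of_realizes_Dgraph hP.ultrahomogeneous
    hP.red_cliques hP.maxRed hP.maxBlue hD hb hb'
  have hrred : red r := hP.maxRed.1 hr
  have hrb : r ≠ b := fun h => hP.maxBlue.1 hb (h ▸ hrred)
  have hrb' : r ≠ b' := fun h => hP.maxBlue.1 hb' (h ▸ hrred)
  have hTb : ∀ t ∈ T, t ≠ b := fun t ht => ne_of_mem_of_not_mem ht hbT
  have hTb' : ∀ t ∈ T, t ≠ b' := fun t ht => ne_of_mem_of_not_mem ht hb'T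
  have hpi : IsPartialIso G red (insert b (insert r T)) (Equiv.swap b b') := by
    refine isPartialIso_swap ?_ (iff_of_false (hP.maxBlue.1 hb') (hP.maxBlue.1 hb)) ?_
    · rintro v (rfl | rfl | hv) hvb
      · exact absurd rfl hvb
      · exact hrb'
      · exact hTb' v hv
    · rintro v (rfl | rfl | hv) hvb
      · exact absurd rfl hvb
      · rw [G.adj_comm, G.adj_comm _ v]
        exact hr_adj.symm
      · exact iff_of_true (hP.maxBlue.2.1 hb' (hTB hv) (hTb' v hv).symm)
          (hP.maxBlue.2.1 hb (hTB hv) (hTb v hv).symm)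
  have hSW : insert b (insert r T) ⊆ MR ∪ MB := by
    rintro v (rfl | rfl | hv)
    exacts [Or.inr hb, Or.inl hr, Or.inr (hTB hv)]
  have hfW : MapsTo (Equiv.swap b b') (insert b (insert r T)) (MR ∪ MB) := by
    rintro v (rfl | rfl | hv)
    · rw [Equiv.swap_apply_left]
      exact Or.inr hb'
    · rw [Equiv.swap_apply_of_ne_of_ne hrb hrb']
      exact Or.inl hr
    · rw [Equiv.swap_apply_of_ne_of_ne (hTb v hv) (hTb' v hv)]
      exact Or.inr (hTB hv)
  obtain ⟨ψ, hψ, hψf⟩ := hP.exists_stabilizesPiece_of_mixed ((hT.insert r).insert b) hpi hSW hfW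
    (mem_insert_of_mem _ (mem_insert r T)) hrred (mem_insert b _) (hP.maxBlue.1 hb)
  refine ⟨ψ, hψ, fun t ht => ?_, ?_⟩
  · rw [hψf (mem_insert_of_mem _ (mem_insert_of_mem _ ht))]
    exact Equiv.swap_apply_of_ne_of_ne (hTb t ht) (hTb' t ht)
  · rw [hψf (mem_insert b _), Equiv.swap_apply_left]

lemma exists_stabilizesPiece_of_subset_blue (hP : IsPiece G red MR MB)
    (hD : Realizes G red Dgraph Dred) {S : Set V} (hS : S.Finite) (hSB : S ⊆ MB) {f : V → V}
    (hf : InjOn f S) (hfB : MapsTo f S MB) :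
    ∃ ψ : G ≃g G, StabilizesPiece red MR MB ψ ∧ EqOn ψ f S := by
  induction S, hS using Set.Finite.induction_on with
  | empty => exact ⟨RelIso.refl _, StabilizesPiece.refl, eqOn_empty _ _⟩
  | @insert a S haS hS ih =>
    obtain ⟨ψ₀, hψ₀, hψ₀f⟩ := ih ((subset_insert a S).trans hSB) (hf.mono (subset_insert a S))
      (hfB.mono_left (subset_insert a S))
    have hfa : f a ∉ f '' S := fun ⟨s, hs, hsa⟩ =>
      haS (hf (mem_insert_of_mem a hs) (mem_insert a S) hsa ▸ hs)
    have hψ₀a : ψ₀ a ∉ f '' S := by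
      rintro ⟨s, hs, hsa⟩
      rw [← hψ₀f hs] at hsa
      exact haS (ψ₀.injective hsa ▸ hs)
    obtain ⟨μ, hμ, hμS, hμa⟩ := hP.exists_stabilizesPiece_apply_eq_fixing hD (hS.image f)
      (hfB.mono_left (subset_insert a S)).image_subset ((hψ₀.2.2 a).2 (hSB (mem_insert a S)))
      (hfB (mem_insert a S)) hψ₀a hfa
    refine ⟨ψ₀.trans μ, hψ₀.trans hμ, ?_⟩
    rintro v (rfl | hv)
    · exact hμa
    · change μ (ψ₀ v) = f v
      rw [hψ₀f hv]
      exact hμS _ (mem_image_of_mem f hv)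

lemma exists_stabilizesPiece_of_forall_not_red (hP : IsPiece G red MR MB)
    (hD : Realizes G red Dgraph Dred) {S : Set V} (hS : S.Finite) {f : V → V}
    (hf : IsPartialIso G red S f) (hSW : S ⊆ MR ∪ MB) (hfW : MapsTo f S (MR ∪ MB))
    (hblue : ∀ x ∈ S, ¬ red x) : ∃ ψ : G ≃g G, StabilizesPiece red MR MB ψ ∧ EqOn ψ f S :=
  hP.exists_stabilizesPiece_of_subset_blue hD hS
    (fun x hx => hP.mem_right_of_not_red (hSW hx) (hblue x hx)) hf.1
    (fun x hx => hP.mem_right_of_not_red (hfW hx) fun h => hblue x hx ((hf.2.1 x hx).1 h))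

lemma exists_stabilizesPiece (hP : IsPiece G red MR MB) (hD : Realizes G red Dgraph Dred)
    {S : Set V} (hS : S.Finite) {f : V → V} (hf : IsPartialIso G red S f)
    (hSW : S ⊆ MR ∪ MB) (hfW : MapsTo f S (MR ∪ MB)) :
    ∃ ψ : G ≃g G, StabilizesPiece red MR MB ψ ∧ EqOn ψ f S := by
  by_cases hblue : ∃ y ∈ S, ¬ red y
  · by_cases hred : ∃ x ∈ S, red x
    · obtain ⟨x, hx, hxr⟩ := hred
      obtain ⟨y, hy, hyb⟩ := hblue
      exact hP.exists_stabilizesPiece_of_mixed hS hf hSW hfW hx hxr hy hyb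
    · push Not at hred
      exact hP.exists_stabilizesPiece_of_forall_not_red hD hS hf hSW hfW hred
  · push Not at hblue
    rw [union_comm] at hSW hfW
    obtain ⟨ψ, hψ, hψf⟩ := hP.compl_colors.exists_stabilizesPiece_of_forall_not_red
      hD.Dgraph_compl_colors hS hf.compl_colors hSW hfW fun x hx => not_not.2 (hblue x hx)
    exact ⟨ψ, hψ.of_compl_colors, hψf⟩

end IsPiece

theorem stmt_3_general {V : Type} (G : SimpleGraph V) (red : V → Prop)
    (hG : IsBasicCUH G red)
    (hD : Realizes G red Dgraph Dred) :
    ∀ MR MB : Set V, IsMaxCliqueIn G {v | red v} MR → IsMaxCliqueIn G {v | ¬ red v} MB →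
      Ultrahomogeneous (G.induce (MR ∪ MB)) (fun x => red x.1) := by
  obtain ⟨⟨-, -, hUH, hUR, hUB⟩, -⟩ := hG
  intro MR MB hMR hMB
  refine ultrahomogeneous_induce_of_forall_extend fun S hSW hS f hf hfW => ?_
  obtain ⟨ψ, ⟨hψc, hψR, hψB⟩, hψf⟩ :=
    IsPiece.exists_stabilizesPiece ⟨hUH, hUR, hUB, hMR, hMB⟩ hD hS hf hSW hfW
  exact ⟨ψ, hψc, fun v => or_congr (hψR v) (hψB v), hψf⟩

/-- a basic CUH graph realizing `D` and `D̃` is piecewise ultrahomogeneous. -/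
theorem stmt_3 {V : Type} (G : SimpleGraph V) (red : V → Prop)
    (hG : IsBasicCUH G red)
    (hD : Realizes G red Dgraph Dred) (hDt : Realizes G red Dtilde Dred) :
    ∀ MR MB : Set V, IsMaxCliqueIn G {v | red v} MR → IsMaxCliqueIn G {v | ¬ red v} MB →
      Ultrahomogeneous (G.induce (MR ∪ MB)) (fun x => red x.1) :=
  stmt_3_general G red hG hD
end

section
/- Let G be a basic CUH graph in which both D and D̃ are realized, and let C ⊆ R be a finite clique of red vertices. If there is a blue vertex adjacent to every vertex of C, then there exist two non-adjacent blue vertices each of which is adjacent to every vertex of C. -/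
open SimpleGraph

/-!
Call a blue vertex adjacent to every vertex of a red clique `K` an apex of `K`. By induction on
`|C|`, every apex `b` of a finite red clique `C` comes with a second apex of `C` that is distinct
from `b` and not adjacent to it; for `|C| ≤ 1` this comes from a non-adjacent blue pair and from
`D̃`. For `C = B + x`, the induction hypothesis gives an apex `w` of `B` not adjacent to `b`, and
we suppose that every apex of `C` is `b` or adjacent to `b`.

If some red clique of size `|B|` has two adjacent apexes, moving the triangle of `D` onto it and
then onto `(B + x, w)` yields an apex of `C` adjacent to `w`, hence to `b`: impossible. Otherwise
`b` is the unique apex of `C`, so by ultrahomogeneity every red clique of size `|C|` has exactly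
one apex, no red clique of size `|C| + 1` has one, and a blue vertex sees exactly `|C|` vertices
of the maximal red clique of each of its red neighbours. Let `c < |B|` count the common
neighbours of the blue edge `b₁b₂` of `D` in the red clique of `r₁`. A red clique `L` of size
`|C| + 1` meeting `C` in `c + 1` vertices, among them `α ≠ β`, gives apexes `g₁` of `L - β` and
`g₂` of `L - α`. Each sees exactly `c` of the vertices of `C`, as `b₂` does of the `|C|`
neighbours of `b₁` in the clique of `r₁`, and transporting `b₁` shows that it is adjacent to `b`. So `g₁ ≠ g₂` are adjacent apexes of the red
clique `L - α - β` of size `|B|`, a contradiction.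
-/

section

open Finset

theorem Finset.card_filter_eq_card_subtype {α : Type*} (s : Finset α) (p : α → Prop)
    [DecidablePred p] : #(s.filter p) = Fintype.card {a : s // p a} := by
  rw [Fintype.card_subtype, ← Finset.card_map (Function.Embedding.subtype _)]
  congr 1
  ext x
  simp [and_comm]

theorem Finset.exists_equiv_forall_iff {α β : Type*} {s : Finset α} {t : Finset β}
    {p : α → Prop} {q : β → Prop} [DecidablePred p] [DecidablePred q]
    (hcard : #s = #t) (hfilter : #(s.filter p) = #(t.filter q)) :
    ∃ e : s ≃ t, ∀ a, q (e a) ↔ p a := by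
  rw [card_filter_eq_card_subtype, card_filter_eq_card_subtype] at hfilter
  let e₁ : {a : s // p a} ≃ {b : t // q b} := Fintype.equivOfCardEq hfilter
  let e₂ : {a : s // ¬ p a} ≃ {b : t // ¬ q b} := Fintype.equivOfCardEq (by
    rw [Fintype.card_subtype_compl, Fintype.card_subtype_compl, hfilter, Fintype.card_coe,
      Fintype.card_coe, hcard])
  refine ⟨(Equiv.sumCompl _).symm.trans ((e₁.sumCongr e₂).trans (Equiv.sumCompl _)), fun a => ?_⟩
  by_cases ha : p a
  · rw [Equiv.trans_apply, Equiv.sumCompl_symm_apply_of_pos (p := fun a : s => p a) ha]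
    exact iff_of_true (e₁ _).2 ha
  · rw [Equiv.trans_apply, Equiv.sumCompl_symm_apply_of_neg (p := fun a : s => p a) ha]
    exact iff_of_false (e₂ _).2 ha

theorem Finset.image_eq_of_equiv {α β : Type*} [DecidableEq β] {s : Finset α} {t : Finset β}
    {f : α → β} (e : s ≃ t) (h : ∀ a : s, f a = e a) : s.image f = t := by
  ext w
  simp only [Finset.mem_image]
  constructor
  · rintro ⟨v, hv, rfl⟩
    exact h ⟨v, hv⟩ ▸ (e _).2
  · intro hw
    exact ⟨_, (e.symm ⟨w, hw⟩).2, by rw [h]; simp⟩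

theorem Option.elim_injective {α β : Type*} {b : β} {f : α → β} (hf : f.Injective)
    (hb : ∀ a, f a ≠ b) : Function.Injective fun o : Option α => o.elim b f := by
  rintro (_ | a) (_ | a') h
  · rfl
  · exact absurd h.symm (hb a')
  · exact absurd h (hb a)
  · exact congrArg some (hf h)

open scoped Classical

variable {V : Type} {G : SimpleGraph V} {red : V → Prop}

def IsRedClique (G : SimpleGraph V) (red : V → Prop) (K : Finset V) : Prop :=
  (∀ v ∈ K, red v) ∧ G.IsClique (K : Set V)

def IsApex (G : SimpleGraph V) (red : V → Prop) (K : Finset V) (q : V) : Prop :=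
  ¬ red q ∧ ∀ v ∈ K, G.Adj q v

theorem IsRedClique.adj_iff {K : Finset V} (hK : IsRedClique G red K) {u v : V} (hu : u ∈ K)
    (hv : v ∈ K) : G.Adj u v ↔ u ≠ v :=
  ⟨G.ne_of_adj, hK.2 hu hv⟩

theorem IsRedClique.mono {K K' : Finset V} (hK : IsRedClique G red K) (h : K' ⊆ K) :
    IsRedClique G red K' :=
  ⟨fun v hv => hK.1 v (h hv), hK.2.subset (Finset.coe_subset.2 h)⟩

theorem IsRedClique.insert {K : Finset V} {x : V} (hK : IsRedClique G red K) (hx : red x)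
    (hxK : ∀ v ∈ K, x ≠ v → G.Adj x v) : IsRedClique G red (insert x K) :=
  ⟨by simpa [hx] using hK.1, by
    rw [Finset.coe_insert, SimpleGraph.isClique_insert]; exact ⟨hK.2, hxK⟩⟩

theorem IsRedClique.eq_or_adj {K : Finset V} (hK : IsRedClique G red K) {a v : V} (ha : a ∈ K)
    (hv : v ∈ K) : v = a ∨ G.Adj v a := by
  by_cases h : v = a
  · exact Or.inl h
  · exact Or.inr (hK.2 hv ha h)

theorem isRedClique_of_forall_eq_or_adj (hRC : IsUnionOfCliques G {v | red v}) {a : V}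
    (ha : red a) {K : Finset V} (hK : ∀ v ∈ K, red v ∧ (v = a ∨ G.Adj v a)) :
    IsRedClique G red K := by
  refine ⟨fun v hv => (hK v hv).1, fun u hu v hv huv => ?_⟩
  obtain ⟨hu, rfl | hua⟩ := hK u hu <;> obtain ⟨hv, rfl | hva⟩ := hK v hv
  · exact absurd rfl huv
  · exact hva.symm
  · exact hua
  · exact hRC u hu _ ha v hv hua hva.symm huv

theorem IsApex.mono {K K' : Finset V} {q : V} (hq : IsApex G red K q) (h : K' ⊆ K) :
    IsApex G red K' q :=
  ⟨hq.1, fun v hv => hq.2 v (h hv)⟩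

theorem IsApex.image {K : Finset V} {q : V} (hq : IsApex G red K q) {ψ : G ≃g G}
    (hψ : ∀ v, red (ψ v) ↔ red v) : IsApex G red (K.image ψ) (ψ q) :=
  ⟨fun h => hq.1 ((hψ q).1 h), Finset.forall_mem_image.2 fun v hv => ψ.map_adj_iff.2 (hq.2 v hv)⟩

theorem Ultrahomogeneous.exists_aut_apply_eq (hUH : Ultrahomogeneous G red) {ι : Type*}
    [Finite ι] {x y : ι → V} (hx : x.Injective) (hy : y.Injective)
    (hred : ∀ i, red (y i) ↔ red (x i)) (hadj : ∀ i j, G.Adj (y i) (y j) ↔ G.Adj (x i) (x j)) :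
    ∃ ψ : G ≃g G, (∀ v, red (ψ v) ↔ red v) ∧ ∀ i, ψ (x i) = y i := by
  have hext : ∀ i, Function.extend x y id (x i) = y i := hx.extend_apply y id
  obtain ⟨ψ, hψred, hψ⟩ := hUH (Set.range x) (Set.finite_range x) (Function.extend x y id)
    ⟨by rintro _ ⟨i, rfl⟩ _ ⟨j, rfl⟩ h; rw [hext, hext] at h; rw [hy h],
     by rintro _ ⟨i, rfl⟩; rw [hext]; exact hred i,
     by rintro _ ⟨i, rfl⟩ _ ⟨j, rfl⟩; rw [hext, hext]; exact hadj i j⟩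
  exact ⟨ψ, hψred, fun i => (hψ _ ⟨i, rfl⟩).trans (hext i)⟩

theorem Ultrahomogeneous.exists_aut_of_isClique (hUH : Ultrahomogeneous G red) {ι : Type*}
    [Finite ι] {x y : ι → V} (hx : x.Injective) (hy : y.Injective)
    (hxK : G.IsClique (Set.range x)) (hyK : G.IsClique (Set.range y))
    (hred : ∀ i, red (y i) ↔ red (x i)) :
    ∃ ψ : G ≃g G, (∀ v, red (ψ v) ↔ red v) ∧ ∀ i, ψ (x i) = y i := by
  refine hUH.exists_aut_apply_eq hx hy hred fun i j => ?_
  by_cases hij : i = j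
  · simp [hij]
  · exact iff_of_true (hyK ⟨i, rfl⟩ ⟨j, rfl⟩ (hy.ne hij)) (hxK ⟨i, rfl⟩ ⟨j, rfl⟩ (hx.ne hij))

theorem Ultrahomogeneous.exists_aut_image_eq (hUH : Ultrahomogeneous G red) {K₁ K₂ : Finset V}
    (hK₁ : IsRedClique G red K₁) (hK₂ : IsRedClique G red K₂) (hcard : #K₁ = #K₂) :
    ∃ ψ : G ≃g G, (∀ v, red (ψ v) ↔ red v) ∧ K₁.image ψ = K₂ := by
  let e := K₁.equivOfCardEq hcard
  obtain ⟨ψ, hψred, hψ⟩ := hUH.exists_aut_of_isClique (x := Subtype.val) (y := fun v => e v)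
    Subtype.val_injective (Subtype.val_injective.comp e.injective)
    (by rw [Subtype.range_coe]; exact hK₁.2)
    (by
      rw [show (Set.range fun v => (e v : V)) = _ from e.surjective.range_comp Subtype.val,
        Subtype.range_coe]
      exact hK₂.2)
    fun v => iff_of_true (hK₂.1 _ (e v).2) (hK₁.1 _ v.2)
  exact ⟨ψ, hψred, Finset.image_eq_of_equiv e hψ⟩

theorem Ultrahomogeneous.exists_aut_image_eq_of_apex (hUH : Ultrahomogeneous G red)
    {K₁ K₂ : Finset V} {z₁ z₂ : V}
    (hK₁ : IsRedClique G red K₁) (hK₂ : IsRedClique G red K₂) (hz₁ : ¬ red z₁) (hz₂ : ¬ red z₂)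
    (hcard : #K₁ = #K₂) (hnbr : #(K₁.filter (G.Adj z₁)) = #(K₂.filter (G.Adj z₂))) :
    ∃ ψ : G ≃g G, (∀ v, red (ψ v) ↔ red v) ∧ ψ z₁ = z₂ ∧ K₁.image ψ = K₂ := by
  obtain ⟨e, he⟩ := Finset.exists_equiv_forall_iff hcard hnbr
  have hz₁K : z₁ ∉ K₁ := fun h => hz₁ (hK₁.1 _ h)
  have hz₂K : z₂ ∉ K₂ := fun h => hz₂ (hK₂.1 _ h)
  let x : Option K₁ → V := fun o => o.elim z₁ Subtype.val
  let y : Option K₁ → V := fun o => o.elim z₂ fun v => e v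
  have hx : x.Injective :=
    Option.elim_injective Subtype.val_injective fun v h => hz₁K (h ▸ v.2)
  have hy : y.Injective := Option.elim_injective (Subtype.val_injective.comp e.injective)
    fun v h => hz₂K (h ▸ (e v).2)
  obtain ⟨ψ, hψred, hψ⟩ := hUH.exists_aut_apply_eq hx hy
    (by
      rintro (_ | u)
      · exact iff_of_false hz₂ hz₁
      · exact iff_of_true (hK₂.1 _ (e u).2) (hK₁.1 _ u.2))
    (by
      rintro (_ | u) (_ | v)
      · simp [x, y]
      · exact he v
      · exact (G.adj_comm _ _).trans ((he u).trans (G.adj_comm _ _))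
      · simp only [x, y, Option.elim_some]
        rw [hK₁.adj_iff u.2 v.2, hK₂.adj_iff (e u).2 (e v).2, Ne, Ne, Subtype.coe_inj,
          Subtype.coe_inj, e.apply_eq_iff_eq])
  exact ⟨ψ, hψred, hψ none, Finset.image_eq_of_equiv e fun v => hψ (some v)⟩

theorem Ultrahomogeneous.exists_aut_pair (hUH : Ultrahomogeneous G red) {a z a' z' : V}
    (ha : red a) (hz : ¬ red z) (ha' : red a') (hz' : ¬ red z')
    (hadj : G.Adj z a ↔ G.Adj z' a') :
    ∃ ψ : G ≃g G, (∀ v, red (ψ v) ↔ red v) ∧ ψ a = a' ∧ ψ z = z' := by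
  have hsingleton : ∀ {a : V}, red a → IsRedClique G red {a} := fun ha =>
    ⟨by simpa using ha, by simp⟩
  obtain ⟨ψ, hψred, hψz, hψa⟩ := hUH.exists_aut_image_eq_of_apex (hsingleton ha)
    (hsingleton ha') hz hz' rfl (by
      rw [Finset.filter_singleton, Finset.filter_singleton]
      split_ifs <;> simp_all)
  rw [Finset.image_singleton, Finset.singleton_inj] at hψa
  exact ⟨ψ, hψred, hψa, hψz⟩

theorem Ultrahomogeneous.exists_aut_triangle (hUH : Ultrahomogeneous G red) {a y z a' y' z' : V}
    (ha : red a) (hy : ¬ red y) (hz : ¬ red z) (ha' : red a') (hy' : ¬ red y') (hz' : ¬ red z')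
    (hay : G.Adj a y) (haz : G.Adj a z) (hyz : G.Adj y z)
    (hay' : G.Adj a' y') (haz' : G.Adj a' z') (hyz' : G.Adj y' z') :
    ∃ ψ : G ≃g G, (∀ v, red (ψ v) ↔ red v) ∧ ψ a = a' ∧ ψ y = y' ∧ ψ z = z' := by
  have htriangle : ∀ {a y z : V}, G.Adj a y → G.Adj a z → G.Adj y z →
      (![a, y, z]).Injective ∧ G.IsClique (Set.range ![a, y, z]) := by
    intro a y z hay haz hyz
    refine ⟨fun i j h => ?_, ?_⟩
    · fin_cases i <;> fin_cases j <;> simp_all [G.ne_of_adj hay, G.ne_of_adj haz,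
        G.ne_of_adj hyz, (G.ne_of_adj hay).symm, (G.ne_of_adj haz).symm, (G.ne_of_adj hyz).symm]
    · rintro _ ⟨i, rfl⟩ _ ⟨j, rfl⟩ h
      fin_cases i <;> fin_cases j <;> simp_all [G.adj_comm]
  obtain ⟨hx, hxK⟩ := htriangle hay haz hyz
  obtain ⟨hx', hxK'⟩ := htriangle hay' haz' hyz'
  obtain ⟨ψ, hψred, hψ⟩ := hUH.exists_aut_of_isClique hx hx' hxK hxK' (by
    intro i; fin_cases i <;> simp [ha, hy, hz, ha', hy', hz'])
  exact ⟨ψ, hψred, hψ 0, hψ 1, hψ 2⟩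

theorem Ultrahomogeneous.exists_apex_of_card_eq (hUH : Ultrahomogeneous G red)
    {K₁ K₂ : Finset V} (hK₁ : IsRedClique G red K₁) (hK₂ : IsRedClique G red K₂)
    (hcard : #K₁ = #K₂) {q : V} (hq : IsApex G red K₁ q) : ∃ g, IsApex G red K₂ g := by
  obtain ⟨ψ, hψ, rfl⟩ := hUH.exists_aut_image_eq hK₁ hK₂ hcard
  exact ⟨ψ q, hq.image hψ⟩

def NoApex (G : SimpleGraph V) (red : V → Prop) (m : ℕ) : Prop :=
  ∀ K, IsRedClique G red K → #K = m → ∀ g, ¬ IsApex G red K g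

def UniqueApex (G : SimpleGraph V) (red : V → Prop) (m : ℕ) : Prop :=
  ∀ K, IsRedClique G red K → #K = m → ∃! g, IsApex G red K g

def NoAdjacentApexes (G : SimpleGraph V) (red : V → Prop) (m : ℕ) : Prop :=
  ∀ K, IsRedClique G red K → #K = m → ∀ y z, IsApex G red K y → IsApex G red K z → ¬ G.Adj y z

theorem NoAdjacentApexes.card_lt {m : ℕ} (h : NoAdjacentApexes G red m) {K : Finset V}
    (hK : IsRedClique G red K) {y z : V} (hy : IsApex G red K y) (hz : IsApex G red K z)
    (hyz : G.Adj y z) : #K < m := by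
  by_contra! hle
  obtain ⟨K', hK'K, hK'⟩ := Finset.exists_subset_card_eq hle
  exact h K' (hK.mono hK'K) hK' y z (hy.mono hK'K) (hz.mono hK'K) hyz

-- For red `a`, the neighbours of `q` in the maximal red clique containing `a`.
def cliqueNeighbors (G : SimpleGraph V) (red : V → Prop) (q a : V) : Set V :=
  {v | red v ∧ G.Adj q v ∧ (v = a ∨ G.Adj v a)}

theorem map_mem_cliqueNeighbors_iff {ψ : G ≃g G} (hψ : ∀ v, red (ψ v) ↔ red v) {q a v : V} :
    ψ v ∈ cliqueNeighbors G red (ψ q) (ψ a) ↔ v ∈ cliqueNeighbors G red q a := by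
  simp only [cliqueNeighbors, Set.mem_ofPred_eq, hψ, ψ.map_adj_iff, ψ.injective.eq_iff]

theorem self_mem_cliqueNeighbors {q a : V} (ha : red a) (hqa : G.Adj q a) :
    a ∈ cliqueNeighbors G red q a :=
  ⟨ha, hqa, Or.inl rfl⟩

theorem isRedClique_of_subset_cliqueNeighbors (hRC : IsUnionOfCliques G {v | red v}) {q a : V}
    (ha : red a) {K : Finset V} (hK : (K : Set V) ⊆ cliqueNeighbors G red q a) :
    IsRedClique G red K :=
  isRedClique_of_forall_eq_or_adj hRC ha fun _ hv => ⟨(hK hv).1, (hK hv).2.2⟩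

theorem isRedClique_union_of_subset_cliqueNeighbors (hRC : IsUnionOfCliques G {v | red v})
    {q₁ q₂ a : V} (ha : red a) {K₁ K₂ : Finset V} (h₁ : (K₁ : Set V) ⊆ cliqueNeighbors G red q₁ a)
    (h₂ : (K₂ : Set V) ⊆ cliqueNeighbors G red q₂ a) : IsRedClique G red (K₁ ∪ K₂) :=
  isRedClique_of_forall_eq_or_adj hRC ha fun _ hv => (Finset.mem_union.1 hv).elim
    (fun hv => ⟨(h₁ hv).1, (h₁ hv).2.2⟩) fun hv => ⟨(h₂ hv).1, (h₂ hv).2.2⟩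

theorem isApex_of_subset_cliqueNeighbors {q a : V} (hq : ¬ red q) {K : Finset V}
    (hK : (K : Set V) ⊆ cliqueNeighbors G red q a) : IsApex G red K q :=
  ⟨hq, fun _ hv => (hK hv).2.1⟩

theorem Ultrahomogeneous.exists_finset_cliqueNeighbors (hUH : Ultrahomogeneous G red)
    (hRC : IsUnionOfCliques G {v | red v}) {m : ℕ} (hno : NoApex G red (m + 1))
    {C : Finset V} (hC : IsRedClique G red C) (hCm : #C = m) {b : V} (hb : IsApex G red C b)
    {a q : V} (ha : red a) (hq : ¬ red q) (hqa : G.Adj q a) :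
    ∃ T : Finset V, (T : Set V) = cliqueNeighbors G red q a ∧ #T = m := by
  -- At most `m`, since `m + 1` of them form a red clique with apex `q`; at least `m`, since
  -- moving `(x, b)` onto `(a, q)` for some `x ∈ C` sends `C` into the set.
  have hbound : ∀ F : Finset V, (F : Set V) ⊆ cliqueNeighbors G red q a → #F ≤ m := by
    intro F hF
    by_contra! hlt
    obtain ⟨F', hF'F, hF'⟩ := Finset.exists_subset_card_eq (Nat.succ_le_of_lt hlt)
    have hF' : (F' : Set V) ⊆ cliqueNeighbors G red q a := (Finset.coe_subset.2 hF'F).trans hF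
    exact hno F' (isRedClique_of_subset_cliqueNeighbors hRC ha hF') ‹_› q
      (isApex_of_subset_cliqueNeighbors hq hF')
  have hfin : (cliqueNeighbors G red q a).Finite := by
    by_contra hinf
    obtain ⟨F, hF, hFm⟩ := Set.Infinite.exists_subset_card_eq hinf (m + 1)
    exact absurd (hbound F hF) (by omega)
  refine ⟨hfin.toFinset, hfin.coe_toFinset, le_antisymm (hbound _ hfin.coe_toFinset.subset) ?_⟩
  obtain rfl | ⟨x, hx⟩ := C.eq_empty_or_nonempty
  · simp [← hCm]
  obtain ⟨ψ, hψred, hψx, hψb⟩ :=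
    hUH.exists_aut_pair (hC.1 x hx) hb.1 ha hq (iff_of_true (hb.2 x hx) hqa)
  calc m = #(C.image ψ) := by rw [Finset.card_image_of_injective _ ψ.injective, hCm]
    _ ≤ #hfin.toFinset := Finset.card_le_card fun v hv => by
      obtain ⟨u, hu, rfl⟩ := Finset.mem_image.1 hv
      rw [Set.Finite.mem_toFinset, ← hψx, ← hψb, map_mem_cliqueNeighbors_iff hψred]
      exact ⟨hC.1 u hu, hb.2 u hu, hC.eq_or_adj hx hu⟩

theorem filter_adj_eq_inter_of_cliqueNeighbors {m : ℕ}
    (hT : ∀ a q, red a → ¬ red q → G.Adj q a →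
      ∃ T : Finset V, (T : Set V) = cliqueNeighbors G red q a ∧ #T = m)
    {C K : Finset V} (hC : IsRedClique G red C) (hK : IsRedClique G red K) (hKm : #K = m)
    {g a : V} (hg : IsApex G red K g) (ha : a ∈ C ∩ K) : C.filter (G.Adj g) = C ∩ K := by
  obtain ⟨haC, haK⟩ := Finset.mem_inter.1 ha
  obtain ⟨T, hTg, hTm⟩ := hT a g (hK.1 a haK) hg.1 (hg.2 a haK)
  have hKT : K = T := Finset.eq_of_subset_of_card_le
    (fun v hv => by
      rw [← Finset.mem_coe, hTg]
      exact ⟨hK.1 v hv, hg.2 v hv, hK.eq_or_adj haK hv⟩)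
    (by rw [hKm, hTm])
  ext v
  simp only [Finset.mem_filter, Finset.mem_inter]
  refine ⟨fun ⟨hvC, hgv⟩ => ⟨hvC, ?_⟩, fun ⟨hvC, hvK⟩ => ⟨hvC, hg.2 v hvK⟩⟩
  rw [hKT, ← Finset.mem_coe, hTg]
  exact ⟨hC.1 v hvC, hgv, hC.eq_or_adj haC hvC⟩

theorem Realizes.exists_Dgraph (hD : Realizes G red Dgraph Dred) :
    ∃ r₁ r₂ b₁ b₂, red r₁ ∧ red r₂ ∧ ¬ red b₁ ∧ ¬ red b₂ ∧ G.Adj r₁ r₂ ∧ G.Adj b₁ b₂ ∧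
      G.Adj r₁ b₁ ∧ G.Adj r₁ b₂ ∧ G.Adj r₂ b₁ ∧ ¬ G.Adj r₂ b₂ := by
  obtain ⟨f, -, hred, hadj⟩ := hD
  refine ⟨f 0, f 1, f 2, f 3, ?_⟩
  simp [hred, hadj, Dred, Dgraph]

theorem Realizes.exists_Dtilde (hDt : Realizes G red Dtilde Dred) :
    ∃ r b₁ b₂, red r ∧ ¬ red b₁ ∧ ¬ red b₂ ∧ G.Adj r b₂ ∧ G.Adj b₂ b₁ ∧ ¬ G.Adj r b₁ := by
  obtain ⟨f, -, hred, hadj⟩ := hDt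
  refine ⟨f 1, f 2, f 3, ?_⟩
  simp [hred, hadj, Dred, Dtilde]

theorem Ultrahomogeneous.exists_ne_not_adj (hUH : Ultrahomogeneous G red)
    (hBpair : ∃ u v, ¬ red u ∧ ¬ red v ∧ u ≠ v ∧ ¬ G.Adj u v) {b : V} (hb : ¬ red b) :
    ∃ f, ¬ red f ∧ f ≠ b ∧ ¬ G.Adj f b := by
  obtain ⟨u, v, hu, hv, huv, huv'⟩ := hBpair
  have hempty : IsRedClique G red ∅ := ⟨by simp, by simp⟩
  obtain ⟨ψ, hψred, hψu, -⟩ := hUH.exists_aut_image_eq_of_apex hempty hempty hu hb rfl rfl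
  refine ⟨ψ v, fun h => hv ((hψred v).1 h), ?_, ?_⟩
  · rw [← hψu]; exact fun h => huv (ψ.injective h).symm
  · rw [← hψu]; exact fun h => huv' (ψ.map_adj_iff.1 h).symm

theorem Ultrahomogeneous.exists_adj_adj_of_not_adj (hUH : Ultrahomogeneous G red)
    (hDt : Realizes G red Dtilde Dred) {r c : V} (hr : red r) (hc : ¬ red c)
    (hcr : ¬ G.Adj c r) : ∃ d, ¬ red d ∧ G.Adj d r ∧ G.Adj d c := by
  obtain ⟨r', b₁, b₂, hr', hb₁, hb₂, hr'b₂, hb₂b₁, hr'b₁⟩ := hDt.exists_Dtilde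
  obtain ⟨ψ, hψred, hψr, hψb⟩ :=
    hUH.exists_aut_pair hr' hb₁ hr hc (iff_of_false (fun h => hr'b₁ h.symm) hcr)
  refine ⟨ψ b₂, fun h => hb₂ ((hψred b₂).1 h), ?_, ?_⟩
  · rw [← hψr]; exact ψ.map_adj_iff.2 hr'b₂.symm
  · rw [← hψb]; exact ψ.map_adj_iff.2 hb₂b₁

theorem Ultrahomogeneous.exists_apex_singleton_ne_not_adj (hUH : Ultrahomogeneous G red)
    (hBC : IsUnionOfCliques G {v | ¬ red v})
    (hBpair : ∃ u v, ¬ red u ∧ ¬ red v ∧ u ≠ v ∧ ¬ G.Adj u v)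
    (hDt : Realizes G red Dtilde Dred) {r b : V} (hr : red r) (hb : ¬ red b) :
    ∃ f, IsApex G red {r} f ∧ f ≠ b ∧ ¬ G.Adj f b := by
  obtain ⟨c, hc, hcb, hcb'⟩ := hUH.exists_ne_not_adj hBpair hb
  by_cases hcr : G.Adj c r
  · exact ⟨c, ⟨hc, by simpa using hcr⟩, hcb, hcb'⟩
  obtain ⟨d, hd, hdr, hdc⟩ := hUH.exists_adj_adj_of_not_adj hDt hr hc hcr
  refine ⟨d, ⟨hd, by simpa using hdr⟩, ?_, fun hdb => hcb' (hBC c hc d hd b hb hdc.symm hdb hcb)⟩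
  rintro rfl
  exact hcb' hdc.symm

theorem Ultrahomogeneous.exists_apex_insert_adj (hUH : Ultrahomogeneous G red)
    (hRC : IsUnionOfCliques G {v | red v}) (hD : Realizes G red Dgraph Dred)
    {K₀ : Finset V} (hK₀ : IsRedClique G red K₀) (hne : K₀.Nonempty) {y z : V}
    (hy : IsApex G red K₀ y) (hz : IsApex G red K₀ z) (hyz : G.Adj y z)
    {B : Finset V} {x w : V} (hB : IsRedClique G red (insert x B)) (hx : x ∉ B)
    (hcard : #B = #K₀) (hw : IsApex G red B w) (hwx : ¬ G.Adj w x) :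
    ∃ q, IsApex G red (insert x B) q ∧ G.Adj q w := by
  obtain ⟨a, ha⟩ := hne
  obtain ⟨r₁, r₂, b₁, b₂, hr₁, hr₂, hb₁, hb₂, hr₁r₂, hb₁b₂, hr₁b₁, hr₁b₂, hr₂b₁, hr₂b₂⟩ :=
    hD.exists_Dgraph
  -- The image of `r₂` extends `K₀` to a red clique seen by `y` but not by `z`, which is then
  -- moved onto `(insert x B, w)`.
  obtain ⟨ψ, hψred, hψr, hψb₁, hψb₂⟩ := hUH.exists_aut_triangle hr₁ hb₁ hb₂ (hK₀.1 a ha) hy.1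
    hz.1 hr₁b₁ hr₁b₂ hb₁b₂ (hy.2 a ha).symm (hz.2 a ha).symm hyz
  have hu : red (ψ r₂) := (hψred r₂).2 hr₂
  have hua : G.Adj (ψ r₂) a := hψr ▸ ψ.map_adj_iff.2 hr₁r₂.symm
  have huy : G.Adj (ψ r₂) y := hψb₁ ▸ ψ.map_adj_iff.2 hr₂b₁
  have huz : ¬ G.Adj z (ψ r₂) := hψb₂ ▸ fun h => hr₂b₂ (ψ.map_adj_iff.1 h.symm)
  have huK₀ : ψ r₂ ∉ K₀ := fun h => huz (hz.2 _ h)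
  have hK : IsRedClique G red (insert (ψ r₂) K₀) := hK₀.insert hu fun v hv huv => by
    obtain rfl | hva := hK₀.eq_or_adj ha hv
    · exact hua
    · exact hRC _ hu a (hK₀.1 a ha) v (hK₀.1 v hv) hua hva.symm huv
  obtain ⟨φ, hφred, hφz, hφK⟩ := hUH.exists_aut_image_eq_of_apex hK hB hz.1 hw.1
    (by rw [Finset.card_insert_of_notMem huK₀, Finset.card_insert_of_notMem hx, hcard])
    (by
      rw [Finset.filter_insert, Finset.filter_insert, if_neg huz, if_neg hwx,
        Finset.filter_true_of_mem hz.2, Finset.filter_true_of_mem hw.2, hcard])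
  have hyK : IsApex G red (insert (ψ r₂) K₀) y :=
    ⟨hy.1, Finset.forall_mem_insert _ _ _ |>.2 ⟨huy.symm, hy.2⟩⟩
  exact ⟨φ y, hφK ▸ hyK.image hφred, hφz ▸ φ.map_adj_iff.2 hyz⟩

theorem Ultrahomogeneous.uniqueApex_of_unique (hUH : Ultrahomogeneous G red) {C : Finset V}
    (hC : IsRedClique G red C) {b : V} (hb : IsApex G red C b)
    (huniq : ∀ q, IsApex G red C q → q = b) : UniqueApex G red #C := by
  intro K hK hKC
  obtain ⟨g, hg⟩ := hUH.exists_apex_of_card_eq hC hK hKC.symm hb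
  refine ⟨g, hg, fun g' hg' => ?_⟩
  obtain ⟨ψ, hψred, hψg, hψK⟩ := hUH.exists_aut_image_eq_of_apex hK hC hg.1 hb.1 hKC (by
    rw [Finset.filter_true_of_mem hg.2, Finset.filter_true_of_mem hb.2, hKC])
  exact ψ.injective ((huniq _ (hψK ▸ hg'.image hψred)).trans hψg.symm)

theorem Ultrahomogeneous.exists_red_notMem_adj_apex (hUH : Ultrahomogeneous G red)
    {B : Finset V} (hB : IsRedClique G red B) {x b w : V} (hx : red x) (hxB : x ∉ B)
    (hxB' : ∀ v ∈ B, G.Adj x v) (hb : IsApex G red B b) (hw : IsApex G red B w)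
    (hbx : G.Adj b x) : ∃ x', red x' ∧ x' ∉ B ∧ (∀ v ∈ B, G.Adj x' v) ∧ G.Adj w x' := by
  obtain ⟨ψ, hψred, hψb, hψB⟩ := hUH.exists_aut_image_eq_of_apex hB hB hb.1 hw.1 rfl (by
    rw [Finset.filter_true_of_mem hb.2, Finset.filter_true_of_mem hw.2])
  refine ⟨ψ x, (hψred x).2 hx, ?_, hψB ▸ Finset.forall_mem_image.2 fun v hv =>
    ψ.map_adj_iff.2 (hxB' v hv), hψb ▸ ψ.map_adj_iff.2 hbx⟩
  rw [← hψB, Finset.mem_image]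
  rintro ⟨v, hv, hvx⟩
  exact hxB (ψ.injective hvx ▸ hv)

theorem Ultrahomogeneous.exists_insert_isRedClique_not_adj (hUH : Ultrahomogeneous G red)
    (hRC : IsUnionOfCliques G {v | red v}) {C : Finset V} (hC : IsRedClique G red C)
    (hU : UniqueApex G red #C) {x : V} (hx : x ∈ C) (hne : (C.erase x).Nonempty) {b w : V}
    (hb : IsApex G red C b) (hw : IsApex G red (C.erase x) w) (hwb : w ≠ b) :
    ∃ x₂, x₂ ∉ C ∧ IsRedClique G red (insert x₂ C) ∧ ¬ G.Adj b x₂ := by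
  set B := C.erase x
  have hB : IsRedClique G red B := hC.mono (C.erase_subset x)
  have hxB : x ∉ B := C.notMem_erase x
  have hCB : C = insert x B := (Finset.insert_erase hx).symm
  obtain ⟨x₂, hx₂, hx₂B, hx₂B', hwx₂⟩ := hUH.exists_red_notMem_adj_apex hB (hC.1 x hx) hxB
    (fun v hv => hC.2 hx (C.erase_subset x hv) (ne_of_mem_erase hv).symm)
    (hb.mono (C.erase_subset x)) hw (hb.2 x hx)
  have hx₂x : x₂ ≠ x := by
    rintro rfl
    refine hwb ((hU C hC rfl).unique ⟨hw.1, ?_⟩ hb)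
    rw [hCB, Finset.forall_mem_insert]
    exact ⟨hwx₂, hw.2⟩
  obtain ⟨a, ha⟩ := hne
  refine ⟨x₂, by rw [hCB, Finset.mem_insert, not_or]; exact ⟨hx₂x, hx₂B⟩,
    hC.insert hx₂ fun v hv hne => ?_, fun hbx₂ => ?_⟩
  · rw [hCB, Finset.mem_insert] at hv
    obtain rfl | hv := hv
    · exact hRC _ hx₂ a (hB.1 a ha) v (hC.1 v hx) (hx₂B' a ha) (hC.2 (C.erase_subset v ha) hx
        (ne_of_mem_erase ha)) hne
    · exact hx₂B' v hv
  · have hK : IsRedClique G red (insert x₂ B) := hB.insert hx₂ fun v hv _ => hx₂B' v hv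
    have hKn : #(insert x₂ B) = #C := by
      rw [Finset.card_insert_of_notMem hx₂B, hCB, Finset.card_insert_of_notMem hxB]
    refine hwb ((hU _ hK hKn).unique ⟨hw.1, ?_⟩ ⟨hb.1, ?_⟩) <;> rw [Finset.forall_mem_insert]
    · exact ⟨hwx₂, hw.2⟩
    · exact ⟨hbx₂, (hb.mono (C.erase_subset x)).2⟩

theorem Ultrahomogeneous.noApex_card_add_one (hUH : Ultrahomogeneous G red)
    (hRC : IsUnionOfCliques G {v | red v}) {C : Finset V} (hC : IsRedClique G red C)
    (hU : UniqueApex G red #C) {x : V} (hx : x ∈ C) (hne : (C.erase x).Nonempty) {b w : V}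
    (hb : IsApex G red C b) (hw : IsApex G red (C.erase x) w) (hwb : w ≠ b) :
    NoApex G red (#C + 1) := by
  intro P hP hPn g hg
  obtain ⟨x₂, hx₂C, hC₂, hbx₂⟩ := hUH.exists_insert_isRedClique_not_adj hRC hC hU hx hne hb hw hwb
  obtain ⟨g', hg'⟩ := hUH.exists_apex_of_card_eq hP hC₂
    (by rw [hPn, Finset.card_insert_of_notMem hx₂C]) hg
  have hg'b : g' = b := (hU C hC rfl).unique (hg'.mono (C.subset_insert x₂)) hb
  exact hbx₂ (hg'b ▸ hg'.2 x₂ (C.mem_insert_self x₂))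

theorem Ultrahomogeneous.exists_disjoint_isRedClique_union (hUH : Ultrahomogeneous G red)
    (hRC : IsUnionOfCliques G {v | red v}) {C K : Finset V} (hC : IsRedClique G red C)
    (hCne : C.Nonempty) (hK : IsRedClique G red K) {j : ℕ} (hj : #C + j ≤ #K) :
    ∃ E, Disjoint C E ∧ #E = j ∧ IsRedClique G red (C ∪ E) := by
  obtain ⟨a, ha⟩ := hCne
  obtain ⟨k, hk⟩ : K.Nonempty := Finset.card_pos.1 (by have := Finset.card_pos.2 ⟨a, ha⟩; omega)
  obtain ⟨ψ, hψred, hψk⟩ := hUH.exists_aut_image_eq (hK.mono (Finset.singleton_subset_iff.2 hk))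
    (hC.mono (Finset.singleton_subset_iff.2 ha)) rfl
  rw [Finset.image_singleton, Finset.singleton_inj] at hψk
  have hW : ∀ v ∈ K.image ψ, red v ∧ (v = a ∨ G.Adj v a) := Finset.forall_mem_image.2
    fun u hu => ⟨(hψred u).2 (hK.1 u hu), hψk ▸ (hK.eq_or_adj hk hu).imp
      (congrArg ψ) ψ.map_adj_iff.2⟩
  obtain ⟨E, hEW, hEj⟩ := Finset.exists_subset_card_eq (show j ≤ #(K.image ψ \ C) by
    have := Finset.le_card_sdiff C (K.image ψ)
    rw [Finset.card_image_of_injective _ ψ.injective] at this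
    omega)
  refine ⟨E, Finset.disjoint_left.2 fun v hvC hvE => (Finset.mem_sdiff.1 (hEW hvE)).2 hvC, hEj,
    isRedClique_of_forall_eq_or_adj hRC (hC.1 a ha) fun v hv => ?_⟩
  rcases Finset.mem_union.1 hv with hv | hv
  · exact ⟨hC.1 v hv, hC.eq_or_adj ha hv⟩
  · exact hW v (Finset.mem_sdiff.1 (hEW hv)).1

theorem Ultrahomogeneous.exists_isRedClique_card_inter (hUH : Ultrahomogeneous G red)
    (hRC : IsUnionOfCliques G {v | red v}) {C K : Finset V} (hC : IsRedClique G red C)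
    (hCne : C.Nonempty) (hK : IsRedClique G red K) {i j : ℕ} (hi : i ≤ #C)
    (hj : #C + j ≤ #K) : ∃ L, IsRedClique G red L ∧ #(C ∩ L) = i ∧ #L = i + j := by
  obtain ⟨E, hCE, hEj, hCEcl⟩ := hUH.exists_disjoint_isRedClique_union hRC hC hCne hK hj
  obtain ⟨P, hPC, hPi⟩ := Finset.exists_subset_card_eq hi
  have hCPE : C ∩ (P ∪ E) = P := by
    rw [Finset.inter_union_distrib_left, Finset.inter_eq_right.2 hPC,
      Finset.disjoint_iff_inter_eq_empty.1 hCE, Finset.union_empty]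
  refine ⟨P ∪ E, hCEcl.mono (Finset.union_subset_union hPC le_rfl), by rw [hCPE, hPi], ?_⟩
  rw [Finset.card_union_of_disjoint (hCE.mono_left hPC), hPi, hEj]

theorem Ultrahomogeneous.exists_apex_adj_of_card_filter_eq (hUH : Ultrahomogeneous G red)
    {K₁ K₂ : Finset V} {z₁ z₂ : V}
    (hK₁ : IsRedClique G red K₁) (hK₂ : IsRedClique G red K₂) (hz₁ : ¬ red z₁) (hz₂ : ¬ red z₂)
    (hcard : #K₁ = #K₂) (hnbr : #(K₁.filter (G.Adj z₁)) = #(K₂.filter (G.Adj z₂))) {q : V}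
    (hq : IsApex G red K₁ q) (hqz : G.Adj q z₁) : ∃ g, IsApex G red K₂ g ∧ G.Adj g z₂ := by
  obtain ⟨ψ, hψred, hψz, hψK⟩ := hUH.exists_aut_image_eq_of_apex hK₁ hK₂ hz₁ hz₂ hcard hnbr
  exact ⟨ψ q, hψK ▸ hq.image hψred, hψz ▸ ψ.map_adj_iff.2 hqz⟩

theorem Ultrahomogeneous.exists_apex_adj_of_card_inter_eq (hUH : Ultrahomogeneous G red)
    {m : ℕ} (hT : ∀ a q, red a → ¬ red q → G.Adj q a →
      ∃ T : Finset V, (T : Set V) = cliqueNeighbors G red q a ∧ #T = m)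
    {C₁ K₁ C₂ K₂ : Finset V} (hC₁ : IsRedClique G red C₁) (hK₁ : IsRedClique G red K₁)
    (hC₂ : IsRedClique G red C₂) (hK₂ : IsRedClique G red K₂) (hC₁m : #C₁ = m)
    (hK₁m : #K₁ = m) (hC₂m : #C₂ = m) (hK₂m : #K₂ = m) {g₁ g₂ : V}
    (hg₁ : IsApex G red K₁ g₁) (hg₂ : IsApex G red K₂ g₂) (h₁ : (C₁ ∩ K₁).Nonempty)
    (h₂ : (C₂ ∩ K₂).Nonempty) (hcard : #(C₁ ∩ K₁) = #(C₂ ∩ K₂)) {q : V}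
    (hq : IsApex G red C₁ q) (hqg : G.Adj q g₁) : ∃ q', IsApex G red C₂ q' ∧ G.Adj q' g₂ := by
  obtain ⟨a₁, ha₁⟩ := h₁
  obtain ⟨a₂, ha₂⟩ := h₂
  refine hUH.exists_apex_adj_of_card_filter_eq hC₁ hC₂ hg₁.1 hg₂.1 (hC₁m.trans hC₂m.symm) ?_ hq hqg
  rw [filter_adj_eq_inter_of_cliqueNeighbors hT hC₁ hK₁ hK₁m hg₁ ha₁,
    filter_adj_eq_inter_of_cliqueNeighbors hT hC₂ hK₂ hK₂m hg₂ ha₂, hcard]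

theorem false_of_isApex_erase_adj (hBC : IsUnionOfCliques G {v | ¬ red v}) {n : ℕ}
    (hadj : NoAdjacentApexes G red n) (hU : UniqueApex G red (n + 1)) (hno : NoApex G red (n + 2))
    {L : Finset V} (hL : IsRedClique G red L) (hLn : #L = n + 2) {α β b : V} (hα : α ∈ L)
    (hβ : β ∈ L) (hαβ : α ≠ β) (hb : ¬ red b)
    (hαb : ∀ g, IsApex G red (L.erase α) g → G.Adj g b)
    (hβb : ∀ g, IsApex G red (L.erase β) g → G.Adj g b) : False := by
  have hLerase : ∀ γ ∈ L, IsRedClique G red (L.erase γ) ∧ #(L.erase γ) = n + 1 := fun γ hγ =>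
    ⟨hL.mono (L.erase_subset γ), by rw [Finset.card_erase_of_mem hγ, hLn]; rfl⟩
  obtain ⟨g₁, hg₁, -⟩ := hU _ (hLerase β hβ).1 (hLerase β hβ).2
  obtain ⟨g₂, hg₂, -⟩ := hU _ (hLerase α hα).1 (hLerase α hα).2
  have hg₁₂ : g₁ ≠ g₂ := by
    rintro rfl
    refine hno L hL hLn g₁ ⟨hg₁.1, fun v hv => ?_⟩
    obtain rfl | hvβ := eq_or_ne v β
    · exact hg₂.2 v (Finset.mem_erase.2 ⟨hαβ.symm, hv⟩)
    · exact hg₁.2 v (Finset.mem_erase.2 ⟨hvβ, hv⟩)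
  have hS₁ : (L.erase β).erase α ⊆ L.erase β := Finset.erase_subset _ _
  have hS₂ : (L.erase β).erase α ⊆ L.erase α := by
    rw [Finset.erase_right_comm]; exact Finset.erase_subset _ _
  refine hadj _ ((hLerase β hβ).1.mono hS₁) ?_ g₁ g₂ (hg₁.mono hS₁) (hg₂.mono hS₂)
    (hBC g₁ hg₁.1 b hb g₂ hg₂.1 (hβb g₁ hg₁) (hαb g₂ hg₂).symm hg₁₂)
  rw [Finset.card_erase_of_mem (Finset.mem_erase.2 ⟨hαβ, hα⟩), (hLerase β hβ).2]
  rfl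

theorem Ultrahomogeneous.false_of_noAdjacentApexes (hUH : Ultrahomogeneous G red)
    (hRC : IsUnionOfCliques G {v | red v}) (hBC : IsUnionOfCliques G {v | ¬ red v})
    (hD : Realizes G red Dgraph Dred) {n : ℕ} (hadj : NoAdjacentApexes G red n)
    {C : Finset V} (hC : IsRedClique G red C) (hCn : #C = n + 1) {x b w : V} (hx : x ∈ C)
    (hne : (C.erase x).Nonempty) (hb : IsApex G red C b) (huniq : ∀ q, IsApex G red C q → q = b)
    (hw : IsApex G red (C.erase x) w) (hwb : w ≠ b) : False := by
  have hU := hUH.uniqueApex_of_unique hC hb huniq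
  have hno := hUH.noApex_card_add_one hRC hC hU hx hne hb hw hwb
  rw [hCn] at hU hno
  have hT := fun a q (ha : red a) (hq : ¬ red q) hqa =>
    hUH.exists_finset_cliqueNeighbors hRC hno hC hCn hb ha hq hqa
  obtain ⟨r, -, b₁, b₂, hr, -, hb₁, hb₂, -, hb₁b₂, hrb₁, hrb₂, -, -⟩ := hD.exists_Dgraph
  obtain ⟨T₁, hT₁, hT₁n⟩ := hT r b₁ hr hb₁ hrb₁.symm
  obtain ⟨T₂, hT₂, hT₂n⟩ := hT r b₂ hr hb₂ hrb₂.symm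
  have hT₁₂cl := isRedClique_union_of_subset_cliqueNeighbors hRC hr hT₁.le hT₂.le
  have hT₁cl := hT₁₂cl.mono Finset.subset_union_left
  have hT₂cl := hT₁₂cl.mono Finset.subset_union_right
  have hrT : r ∈ T₁ ∩ T₂ := Finset.mem_inter.2
    ⟨Finset.mem_coe.1 (hT₁ ▸ self_mem_cliqueNeighbors hr hrb₁.symm),
      Finset.mem_coe.1 (hT₂ ▸ self_mem_cliqueNeighbors hr hrb₂.symm)⟩
  have hT₁₂pos : 0 < #(T₁ ∩ T₂) := Finset.card_pos.2 ⟨r, hrT⟩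
  have hT₁₂n : #(T₁ ∩ T₂) < n := hadj.card_lt (hT₁cl.mono Finset.inter_subset_left)
    (isApex_of_subset_cliqueNeighbors hb₁ (hT₁ ▸ Finset.coe_subset.2 Finset.inter_subset_left))
    (isApex_of_subset_cliqueNeighbors hb₂ (hT₂ ▸ Finset.coe_subset.2 Finset.inter_subset_right))
    hb₁b₂
  obtain ⟨L, hL, hCLn, hLn⟩ := hUH.exists_isRedClique_card_inter hRC hC ⟨x, hx⟩ hT₁₂cl
    (i := #(T₁ ∩ T₂) + 1) (j := n + 1 - #(T₁ ∩ T₂)) (by omega)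
    (by have := Finset.card_union_add_card_inter T₁ T₂; omega)
  have hCL : (C ∩ L).Nontrivial := Finset.one_lt_card_iff_nontrivial.1 (by omega)
  -- `g` sees as many vertices of `C` as `b₂` sees of `T₁`, so the image of `b₁` under an
  -- automorphism moving `(T₁, b₂)` onto `(C, g)` is an apex of `C` adjacent to `g`, i.e. `b`.
  have hapex : ∀ γ ∈ C ∩ L, ∀ g, IsApex G red (L.erase γ) g → G.Adj g b := by
    intro γ hγ g hg
    obtain ⟨q, hq, hqg⟩ := hUH.exists_apex_adj_of_card_inter_eq hT hT₁cl hT₂cl hC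
      (hL.mono (L.erase_subset γ)) hT₁n hT₂n hCn
      (by rw [Finset.card_erase_of_mem (Finset.mem_inter.1 hγ).2]; omega)
      (isApex_of_subset_cliqueNeighbors hb₂ hT₂.le) hg ⟨r, hrT⟩
      (by rw [Finset.inter_erase]; exact hCL.erase_nonempty)
      (by rw [Finset.inter_erase, Finset.card_erase_of_mem hγ, hCLn]; rfl)
      (isApex_of_subset_cliqueNeighbors hb₁ hT₁.le) hb₁b₂
    exact huniq q hq ▸ hqg.symm
  obtain ⟨α, hα, β, hβ, hαβ⟩ := hCL
  exact false_of_isApex_erase_adj hBC hadj hU hno hL (by omega) (Finset.mem_inter.1 hα).2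
    (Finset.mem_inter.1 hβ).2 hαβ hb.1 (hapex α hα) (hapex β hβ)

theorem Ultrahomogeneous.exists_apex_ne_not_adj_succ (hUH : Ultrahomogeneous G red)
    (hRC : IsUnionOfCliques G {v | red v}) (hBC : IsUnionOfCliques G {v | ¬ red v})
    (hD : Realizes G red Dgraph Dred) {n : ℕ} (hn : 0 < n)
    (ih : ∀ B, IsRedClique G red B → #B = n → ∀ b, IsApex G red B b →
      ∃ f, IsApex G red B f ∧ f ≠ b ∧ ¬ G.Adj f b)
    {C : Finset V} (hC : IsRedClique G red C) (hCn : #C = n + 1) {b : V}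
    (hb : IsApex G red C b) : ∃ f, IsApex G red C f ∧ f ≠ b ∧ ¬ G.Adj f b := by
  by_contra! hcon
  obtain ⟨x, hx⟩ : C.Nonempty := Finset.card_pos.1 (by omega)
  have hB := hC.mono (C.erase_subset x)
  have hBn : #(C.erase x) = n := by rw [Finset.card_erase_of_mem hx, hCn]; rfl
  obtain ⟨w, hw, hwb, hwb'⟩ := ih _ hB hBn b (hb.mono (C.erase_subset x))
  have hnotw : ∀ q, IsApex G red C q → ¬ G.Adj q w := by
    intro q hq hqw
    obtain rfl | hqb := eq_or_ne q b
    · exact hwb' hqw.symm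
    · exact hwb' (hBC w hw.1 q hq.1 b hb.1 hqw.symm (hcon q hq hqb) hwb)
  have hwx : ¬ G.Adj w x := fun hwx => hwb' (hcon w ⟨hw.1, fun v hv =>
    (eq_or_ne v x).elim (fun h => h ▸ hwx) fun h => hw.2 v (Finset.mem_erase.2 ⟨h, hv⟩)⟩ hwb)
  by_cases hadj : NoAdjacentApexes G red n
  · refine hUH.false_of_noAdjacentApexes hRC hBC hD hadj hC hCn hx (Finset.card_pos.1 (by omega))
      hb (fun q hq => ?_) hw hwb
    by_contra hqb
    exact hadj _ hB hBn q b (hq.mono (C.erase_subset x)) (hb.mono (C.erase_subset x))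
      (hcon q hq hqb)
  · simp only [NoAdjacentApexes, not_forall, not_not] at hadj
    obtain ⟨K₀, hK₀, hK₀n, y, z, hy, hz, hyz⟩ := hadj
    obtain ⟨q, hq, hqw⟩ := hUH.exists_apex_insert_adj hRC hD hK₀ (Finset.card_pos.1 (by omega))
      hy hz hyz (by rwa [Finset.insert_erase hx]) (C.notMem_erase x) (hBn.trans hK₀n.symm) hw hwx
    exact hnotw q (Finset.insert_erase hx ▸ hq) hqw

theorem Ultrahomogeneous.exists_apex_ne_not_adj (hUH : Ultrahomogeneous G red)
    (hRC : IsUnionOfCliques G {v | red v}) (hBC : IsUnionOfCliques G {v | ¬ red v})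
    (hBpair : ∃ u v, ¬ red u ∧ ¬ red v ∧ u ≠ v ∧ ¬ G.Adj u v)
    (hD : Realizes G red Dgraph Dred) (hDt : Realizes G red Dtilde Dred) (n : ℕ) :
    ∀ C, IsRedClique G red C → #C = n → ∀ b, IsApex G red C b →
      ∃ f, IsApex G red C f ∧ f ≠ b ∧ ¬ G.Adj f b := by
  induction n with
  | zero =>
    intro C _ hCn b hb
    obtain ⟨f, hf, hfb, hfb'⟩ := hUH.exists_ne_not_adj hBpair hb.1
    exact ⟨f, ⟨hf, by simp [Finset.card_eq_zero.1 hCn]⟩, hfb, hfb'⟩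
  | succ n ih =>
    intro C hC hCn b hb
    obtain rfl | hn := Nat.eq_zero_or_pos n
    · obtain ⟨r, rfl⟩ := Finset.card_eq_one.1 hCn
      exact hUH.exists_apex_singleton_ne_not_adj hBC hBpair hDt
        (hC.1 r (Finset.mem_singleton_self r)) hb.1
    · exact hUH.exists_apex_ne_not_adj_succ hRC hBC hD hn ih hC hCn hb

end

/-- in a basic CUH graph realizing `D` and `D̃`, any finite red clique with a
common blue neighbor has two non-adjacent common blue neighbors. -/
theorem stmt_4 {V : Type} (G : SimpleGraph V) (red : V → Prop)
    (hG : IsBasicCUH G red)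
    (hD : Realizes G red Dgraph Dred) (hDt : Realizes G red Dtilde Dred)
    (C : Finset V) (hCred : ∀ v ∈ C, red v)
    (hCcl : ∀ u ∈ C, ∀ v ∈ C, u ≠ v → G.Adj u v)
    (hdom : ∃ b, ¬ red b ∧ ∀ v ∈ C, G.Adj b v) :
    ∃ b₁ b₂, ¬ red b₁ ∧ ¬ red b₂ ∧ b₁ ≠ b₂ ∧ ¬ G.Adj b₁ b₂ ∧
      (∀ v ∈ C, G.Adj b₁ v) ∧ (∀ v ∈ C, G.Adj b₂ v) := by
  obtain ⟨⟨-, -, hUH, hRC, hBC⟩, -, -, hBpair⟩ := hG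
  obtain ⟨b, hb⟩ := hdom
  obtain ⟨f, hf, hfb, hfb'⟩ := hUH.exists_apex_ne_not_adj hRC hBC hBpair hD hDt _ C
    ⟨hCred, fun u hu v hv => hCcl u hu v hv⟩ rfl b hb
  exact ⟨b, f, hb.1, hf.1, hfb.symm, fun h => hfb' h.symm, hb.2, hf.2⟩
end
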